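/- arXiv:2306.06355 — 4 statements merged into one kernel-verified Lean document; each statement's English description precedes it below -/
import Mathlib

section
/- Define f(k) := Σ_{ℓ ∣ k} |μ(ℓ)| · (log ℓ)/ℓ. There exists an absolute constant C > 0 such that for all positive integers k ≥ 2, f(k) ≤ C · (k/φ(k)) · Σ_{p ∣ k} (log p)/p, where φ is Euler's totient function and the last sum runs over prime divisors of k. -/
open ArithmeticFunction
open scoped ArithmeticFunction.Moebius

section Aux
open Finset

private theorem lemA (k : ℕ) (hk : k ≠ 0) :
    ∑ m ∈ k.divisors with Squarefree m, ((m : ℝ))⁻¹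
      = ∏ p ∈ k.primeFactors, (1 + (p : ℝ)⁻¹) := by
  rw [Nat.sum_divisors_filter_squarefree hk]
  have h1 : (UniqueFactorizationMonoid.normalizedFactors k).toFinset = k.primeFactors := by
    rw [Nat.factors_eq]; simp
  rw [h1]
  have h2 : ∀ p ∈ k.primeFactors, (1 + (p:ℝ)⁻¹) = ((p:ℝ)⁻¹ + 1) := fun p _ => add_comm _ _
  rw [Finset.prod_congr rfl h2, Finset.prod_add]
  apply Finset.sum_congr rfl
  intro t ht
  have : ((t.val.prod : ℕ) : ℝ) = ∏ i ∈ t, (i : ℝ) := by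
    rw [Nat.cast_multiset_prod, Finset.prod]
  simp [this, Finset.prod_inv_distrib]

private theorem lemB (k : ℕ) (hk : k ≠ 0) :
    ∏ p ∈ k.primeFactors, (1 + (p : ℝ)⁻¹) ≤ (k : ℝ) / (Nat.totient k : ℝ) := by
  have htot : (Nat.totient k : ℝ) = k * ∏ p ∈ k.primeFactors, (1 - (p : ℝ)⁻¹) := by
    have := Nat.totient_eq_mul_prod_factors k
    have h2 := congrArg (fun q : ℚ => (q : ℝ)) this
    push_cast at h2 ⊢
    simpa using h2
  have hprodpos : 0 < ∏ p ∈ k.primeFactors, (1 - (p : ℝ)⁻¹) := by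
    apply Finset.prod_pos
    intro p hp
    have hp2 : 2 ≤ p := (Nat.prime_of_mem_primeFactors hp).two_le
    have : (p:ℝ)⁻¹ < 1 := by
      rw [inv_lt_one_iff₀]; right; exact_mod_cast Nat.lt_of_lt_of_le one_lt_two hp2
    linarith
  have hkpos : (0:ℝ) < k := by exact_mod_cast Nat.pos_of_ne_zero hk
  rw [htot]
  have heq : (k:ℝ) / ((k:ℝ) * ∏ p ∈ k.primeFactors, (1 - (p : ℝ)⁻¹))
      = ∏ p ∈ k.primeFactors, (1 - (p : ℝ)⁻¹)⁻¹ := by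
    rw [div_mul_eq_div_div, div_self hkpos.ne', Finset.prod_inv_distrib, one_div]
  rw [heq]
  apply Finset.prod_le_prod
  · intro p hp; positivity
  · intro p hp
    have hp2 : 2 ≤ p := (Nat.prime_of_mem_primeFactors hp).two_le
    have hppos : (0:ℝ) < p := by positivity
    have h1 : (0:ℝ) < 1 - (p:ℝ)⁻¹ := by
      have : (p:ℝ)⁻¹ < 1 := by
        rw [inv_lt_one_iff₀]; right; exact_mod_cast Nat.lt_of_lt_of_le one_lt_two hp2
      linarith
    rw [show (1 - (p:ℝ)⁻¹)⁻¹ = 1/(1-(p:ℝ)⁻¹) from (one_div _).symm, le_div_iff₀ h1]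
    nlinarith [sq_nonneg ((p:ℝ)⁻¹)]

private theorem lemC (k p : ℕ) (hk : k ≠ 0) (hpp : p.Prime) :
    ∑ ℓ ∈ (k.divisors.filter Squarefree).filter (p ∣ ·), ((ℓ : ℝ))⁻¹
      ≤ (p : ℝ)⁻¹ * ∑ m ∈ k.divisors.filter Squarefree, ((m : ℝ))⁻¹ := by
  set D := k.divisors.filter Squarefree with hD
  set S := D.filter (p ∣ ·) with hS
  have hpr : (0:ℝ) < p := by exact_mod_cast hpp.pos
  have step1 : ∑ ℓ ∈ S, ((ℓ : ℝ))⁻¹ = (p:ℝ)⁻¹ * ∑ ℓ ∈ S, (((ℓ / p : ℕ)) : ℝ)⁻¹ := by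
    rw [Finset.mul_sum]
    apply Finset.sum_congr rfl
    intro ℓ hℓ
    have hpd : p ∣ ℓ := (Finset.mem_filter.mp hℓ).2
    have : ℓ = p * (ℓ / p) := (Nat.mul_div_cancel' hpd).symm
    rw [this, Nat.mul_div_cancel_left _ hpp.pos]
    push_cast
    rw [mul_inv]
  rw [step1]
  apply mul_le_mul_of_nonneg_left _ (by positivity)
  have hinj : Set.InjOn (· / p) S := by
    intro a ha b hb hab
    have hpa : p ∣ a := (Finset.mem_filter.mp ha).2
    have hpb : p ∣ b := (Finset.mem_filter.mp hb).2
    simp only at hab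
    rw [← Nat.mul_div_cancel' hpa, ← Nat.mul_div_cancel' hpb, hab]
  have himg := Finset.sum_image (s := S) (g := fun x => x / p)
    (f := fun m : ℕ => ((m : ℝ))⁻¹) (fun a ha b hb hab => hinj ha hb hab)
  rw [← himg]
  apply Finset.sum_le_sum_of_subset_of_nonneg
  · intro m hm
    obtain ⟨ℓ, hℓ, rfl⟩ := Finset.mem_image.mp hm
    obtain ⟨hℓD, hpd⟩ := Finset.mem_filter.mp hℓ
    obtain ⟨hℓdvd, hℓsq⟩ := Finset.mem_filter.mp hℓD
    rw [Nat.mem_divisors] at hℓdvd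
    rw [hD, Finset.mem_filter, Nat.mem_divisors]
    exact ⟨⟨(Nat.div_dvd_of_dvd hpd).trans hℓdvd.1, hk⟩,
      hℓsq.squarefree_of_dvd (Nat.div_dvd_of_dvd hpd)⟩
  · intro m _ _; positivity

end Aux

open Finset in
/-- There is an absolute constant `C > 0` such that for all `k ≥ 2`,
`Σ_{ℓ ∣ k} |μ(ℓ)| log ℓ / ℓ ≤ C (k/φ(k)) Σ_{p ∣ k} (log p)/p`. -/
theorem moebius_log_divisor_sum_bound :
    ∃ C : ℝ, 0 < C ∧ ∀ k : ℕ, 2 ≤ k →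
      (∑ ℓ ∈ k.divisors, |(μ ℓ : ℝ)| * Real.log ℓ / ℓ)
        ≤ C * ((k : ℝ) / (Nat.totient k : ℝ)) * ∑ p ∈ k.primeFactors, Real.log p / p := by
  refine ⟨1, one_pos, fun k hk => ?_⟩
  have hk0 : k ≠ 0 := by omega
  set D := k.divisors.filter Squarefree with hD
  set T := ∑ m ∈ D, ((m : ℝ))⁻¹ with hT
  -- Step 1: reduce to squarefree divisors
  have step1 : (∑ ℓ ∈ k.divisors, |(μ ℓ : ℝ)| * Real.log ℓ / ℓ)
      = ∑ ℓ ∈ D, Real.log ℓ * ((ℓ : ℝ))⁻¹ := by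
    rw [hD, Finset.sum_filter]
    apply Finset.sum_congr rfl
    intro ℓ hℓ
    have : |(μ ℓ : ℝ)| = if Squarefree ℓ then 1 else 0 := by
      rw [← Int.cast_abs, abs_moebius]
      split_ifs <;> simp
    rw [this]
    split_ifs with h
    · rw [one_mul, div_eq_mul_inv]
    · rw [zero_mul, zero_div]
  rw [step1]
  -- Step 2: log ℓ = sum over prime factors, rewrite as ite sum over k.primeFactors
  have step2 : ∀ ℓ ∈ D, Real.log ℓ * ((ℓ : ℝ))⁻¹
      = ∑ p ∈ k.primeFactors, (if p ∣ ℓ then Real.log p * ((ℓ : ℝ))⁻¹ else 0) := by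
    intro ℓ hℓ
    obtain ⟨hdvd, hsq⟩ := Finset.mem_filter.mp hℓ
    rw [Nat.mem_divisors] at hdvd
    have hℓ0 : ℓ ≠ 0 := fun h => hdvd.2 (by simpa [h] using hdvd.1)
    have hlog : Real.log ℓ = ∑ p ∈ ℓ.primeFactors, Real.log p := by
      conv_lhs => rw [← Nat.prod_primeFactors_of_squarefree hsq]
      push_cast
      rw [Real.log_prod]
      intro p hp
      exact_mod_cast (Nat.prime_of_mem_primeFactors hp).pos.ne'
    have hpf : ℓ.primeFactors = k.primeFactors.filter (· ∣ ℓ) := by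
      ext p
      simp only [Finset.mem_filter, Nat.mem_primeFactors]
      constructor
      · rintro ⟨hp, hpℓ, -⟩
        exact ⟨⟨hp, hpℓ.trans hdvd.1, hk0⟩, hpℓ⟩
      · rintro ⟨⟨hp, -, -⟩, hpℓ⟩
        exact ⟨hp, hpℓ, hℓ0⟩
    rw [hlog, hpf, Finset.sum_filter, Finset.sum_mul]
    apply Finset.sum_congr rfl
    intro p _
    split_ifs <;> simp
  rw [Finset.sum_congr rfl step2, Finset.sum_comm]
  -- Step 3: bound each prime's contribution
  have step3 : ∀ p ∈ k.primeFactors,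
      (∑ ℓ ∈ D, if p ∣ ℓ then Real.log p * ((ℓ : ℝ))⁻¹ else 0)
        ≤ Real.log p / p * T := by
    intro p hp
    have hpp := Nat.prime_of_mem_primeFactors hp
    have hlogp : 0 ≤ Real.log p := Real.log_nonneg (by exact_mod_cast hpp.one_lt.le)
    have : (∑ ℓ ∈ D, if p ∣ ℓ then Real.log p * ((ℓ : ℝ))⁻¹ else 0)
        = Real.log p * ∑ ℓ ∈ D.filter (p ∣ ·), ((ℓ : ℝ))⁻¹ := by
      rw [Finset.mul_sum]
      exact (Finset.sum_filter _ _).symm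
    rw [this, div_eq_mul_inv, mul_assoc]
    exact mul_le_mul_of_nonneg_left (lemC k p hk0 hpp) hlogp
  calc ∑ p ∈ k.primeFactors, ∑ ℓ ∈ D, (if p ∣ ℓ then Real.log p * ((ℓ : ℝ))⁻¹ else 0)
      ≤ ∑ p ∈ k.primeFactors, Real.log p / p * T := Finset.sum_le_sum step3
    _ = T * ∑ p ∈ k.primeFactors, Real.log p / p := by rw [← Finset.sum_mul, mul_comm]
    _ ≤ ((k : ℝ) / (Nat.totient k : ℝ)) * ∑ p ∈ k.primeFactors, Real.log p / p := by
        apply mul_le_mul_of_nonneg_right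
        · rw [hT, hD, lemA k hk0]; exact lemB k hk0
        · apply Finset.sum_nonneg
          intro p hp
          have hpp := Nat.prime_of_mem_primeFactors hp
          have : 0 ≤ Real.log p := Real.log_nonneg (by exact_mod_cast hpp.one_lt.le)
          positivity
    _ = 1 * ((k : ℝ) / (Nat.totient k : ℝ)) * ∑ p ∈ k.primeFactors, Real.log p / p := by
        rw [one_mul]
end

section
/- Let χ be a completely multiplicative function with |χ(n)| ≤ 1 for all n, and let a be a positive integer. Then for all real z ≥ 1, Σ_{n ≤ z, gcd(n,a)=1} χ(n)/n = ∏_{p ∣ a} (1 − χ(p)/p) · Σ_{n ≤ z} χ(n)/n + O( (a/φ(a)) · Σ_{p ∣ a} (log p)/p ), with an absolute implied constant. -/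
open Finset

private lemma aux_chi_prod (χ : ℕ → ℂ) (h1 : χ 1 = 1)
    (hmul : ∀ m n : ℕ, χ (m * n) = χ m * χ n) (T : Finset ℕ) :
    χ (∏ p ∈ T, p) = ∏ p ∈ T, χ p := by
  classical
  induction T using Finset.cons_induction with
  | empty => simpa using h1
  | cons p T hp ih => rw [Finset.prod_cons, Finset.prod_cons, hmul, ih]

/-- tail bound : `‖∑_{N/d < n ≤ N} χ n / n‖ ≤ 1 + log d`. -/
private lemma aux_tail (χ : ℕ → ℂ) (hle : ∀ n : ℕ, ‖χ n‖ ≤ 1) (N d : ℕ)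
    (hN : 1 ≤ N) (hd : 1 ≤ d) :
    ‖∑ n ∈ Finset.Ioc (N / d) N, χ n / (n : ℂ)‖ ≤ 1 + Real.log d := by
  have h1 : ‖∑ n ∈ Finset.Ioc (N / d) N, χ n / (n : ℂ)‖
      ≤ ∑ n ∈ Finset.Ioc (N / d) N, (n : ℝ)⁻¹ := by
    refine (norm_sum_le _ _).trans (Finset.sum_le_sum fun n hn => ?_)
    have hn1 : 1 ≤ n := le_trans (Nat.succ_le_succ (Nat.zero_le _)) (mem_Ioc.mp hn).1
    rw [norm_div]
    have hnpos : (0:ℝ) < (n:ℝ) := by exact_mod_cast hn1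
    rw [Complex.norm_natCast]
    rw [div_le_iff₀ hnpos, inv_mul_cancel₀ hnpos.ne']
    exact hle n
  refine h1.trans ?_
  set M := N / d with hM
  have hMN : M ≤ N := Nat.div_le_self _ _
  -- harmonic sums
  have hsplit : ∑ n ∈ Finset.Ioc M N, (n : ℝ)⁻¹
      = (harmonic N : ℝ) - (harmonic M : ℝ) := by
    have := Finset.sum_Ioc_consecutive (fun n : ℕ => (n : ℝ)⁻¹)
      (Nat.zero_le M) hMN
    have hh : ∀ k : ℕ, (harmonic k : ℝ) = ∑ n ∈ Finset.Ioc 0 k, (n : ℝ)⁻¹ := by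
      intro k
      rw [harmonic_eq_sum_Icc]
      push_cast
      rw [← Finset.Icc_add_one_left_eq_Ioc]; rfl
    rw [hh, hh]
    linarith [this]
  rw [hsplit]
  have hub := harmonic_le_one_add_log N
  have hlb := log_add_one_le_harmonic M
  have hNd : (N : ℝ) ≤ (d : ℝ) * ((M : ℝ) + 1) := by
    have : N < d * (M + 1) := by
      have h0 : N / d < N / d + 1 := Nat.lt_succ_self _
      have := (Nat.div_lt_iff_lt_mul hd).mp h0
      calc N < (N / d + 1) * d := this
        _ = d * (M + 1) := by ring
    exact_mod_cast this.le
  have hlogN : Real.log N ≤ Real.log d + Real.log ((M : ℝ) + 1) := by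
    have h2 : (0:ℝ) < (d:ℝ) := by exact_mod_cast hd
    have h3 : (0:ℝ) < (M:ℝ) + 1 := by positivity
    calc Real.log N ≤ Real.log ((d:ℝ) * ((M:ℝ)+1)) := by
          apply Real.log_le_log (by exact_mod_cast hN) hNd
      _ = Real.log d + Real.log ((M:ℝ)+1) := Real.log_mul h2.ne' h3.ne'
  have : ((M : ℝ) + 1) = ((M + 1 : ℕ) : ℝ) := by push_cast; ring
  rw [this] at hlogN
  linarith [hub, hlb]

/-- reindex: sum over multiples of `d` in `[1,N]`. -/
private lemma aux_reindex (χ : ℕ → ℂ) (hmul : ∀ m n : ℕ, χ (m * n) = χ m * χ n)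
    (N d : ℕ) (hd : 0 < d) :
    ∑ n ∈ (Finset.Icc 1 N).filter (fun n => d ∣ n), χ n / (n : ℂ)
      = (χ d / d) * ∑ m ∈ Finset.Icc 1 (N / d), χ m / (m : ℂ) := by
  rw [Finset.mul_sum]
  refine Finset.sum_bij' (fun n _ => n / d) (fun m _ => d * m) ?_ ?_ ?_ ?_ ?_
  · intro n hn
    simp only [mem_filter, mem_Icc] at hn ⊢
    obtain ⟨⟨h1, h2⟩, hdn⟩ := hn
    constructor
    · exact Nat.one_le_div_iff hd |>.mpr (Nat.le_of_dvd (lt_of_lt_of_le Nat.zero_lt_one h1) hdn)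
    · exact Nat.div_le_div_right h2
  · intro m hm
    simp only [mem_filter, mem_Icc] at hm ⊢
    obtain ⟨h1, h2⟩ := hm
    refine ⟨⟨Nat.one_le_iff_ne_zero.mpr (by positivity), ?_⟩, Dvd.intro m rfl⟩
    rw [mul_comm]
    exact (Nat.le_div_iff_mul_le hd).mp h2
  · intro n hn
    simp only [mem_filter] at hn
    exact Nat.mul_div_cancel' hn.2
  · intro m hm
    exact Nat.mul_div_cancel_left m hd
  · intro n hn
    simp only [mem_filter, mem_Icc] at hn
    obtain ⟨⟨h1, h2⟩, hdn⟩ := hn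
    obtain ⟨m, rfl⟩ := hdn
    show χ (d * m) / ((d * m : ℕ) : ℂ) = χ d / d * (χ (d * m / d) / ((d * m / d : ℕ) : ℂ))
    rw [Nat.mul_div_cancel_left m hd, hmul]
    have hm : m ≠ 0 := by rintro rfl; simp at h1
    push_cast
    rw [mul_div_assoc]
    rw [div_mul_eq_div_div]
    ring


private lemma aux_alt (Q : Finset ℕ) :
    ∑ T ∈ Q.powerset, (-1:ℂ)^T.card = if Q = ∅ then 1 else 0 := by
  classical
  have h := Finset.sum_powerset_neg_one_pow_card (x := Q)
  have : ((∑ T ∈ Q.powerset, (-1:ℤ)^T.card : ℤ) : ℂ) = ∑ T ∈ Q.powerset, (-1:ℂ)^T.card := by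
    push_cast
    rfl
  rw [← this, h]
  split <;> simp

private lemma aux_indicator (a : ℕ) (ha : 0 < a) (n : ℕ) (hn : n ≠ 0) :
    (if n.Coprime a then (1:ℂ) else 0)
      = ∑ T ∈ a.primeFactors.powerset,
          (-1:ℂ)^T.card * (if (∏ p ∈ T, p) ∣ n then 1 else 0) := by
  classical
  set Q := a.primeFactors.filter (· ∣ n) with hQdef
  have hQP : Q ⊆ a.primeFactors := Finset.filter_subset _ _
  have hsub : ∀ T ∈ a.primeFactors.powerset, ((∏ p ∈ T, p) ∣ n ↔ T ⊆ Q) := by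
    intro T hT
    rw [Finset.mem_powerset] at hT
    constructor
    · intro h p hp
      rw [hQdef, Finset.mem_filter]
      exact ⟨hT hp, dvd_trans (Finset.dvd_prod_of_mem _ hp) h⟩
    · intro h
      refine Finset.prod_primes_dvd n ?_ ?_
      · intro p hp
        exact (Nat.prime_iff.mp (Nat.prime_of_mem_primeFactors (hT hp)))
      · intro p hp
        exact (Finset.mem_filter.mp (h hp)).2
  have hrw : ∑ T ∈ a.primeFactors.powerset,
        (-1:ℂ)^T.card * (if (∏ p ∈ T, p) ∣ n then 1 else 0)
      = ∑ T ∈ Q.powerset, (-1:ℂ)^T.card := by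
    have e1 : ∀ T ∈ a.primeFactors.powerset,
        (-1:ℂ)^T.card * (if (∏ p ∈ T, p) ∣ n then 1 else 0)
          = if T ⊆ Q then (-1:ℂ)^T.card else 0 := by
      intro T hT
      rw [mul_ite, mul_one, mul_zero]
      by_cases h : T ⊆ Q
      · rw [if_pos ((hsub T hT).mpr h), if_pos h]
      · rw [if_neg (fun hd => h ((hsub T hT).mp hd)), if_neg h]
    rw [Finset.sum_congr rfl e1, ← Finset.sum_filter]
    congr 1
    ext T
    simp only [Finset.mem_filter, Finset.mem_powerset]
    exact ⟨fun h => h.2, fun h => ⟨h.trans hQP, h⟩⟩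
  rw [hrw, aux_alt]
  congr 1
  rw [eq_iff_iff, Finset.filter_eq_empty_iff]
  constructor
  · intro h p hpa hpn
    have hp := Nat.prime_of_mem_primeFactors hpa
    have hd : p ∣ Nat.gcd n a := Nat.dvd_gcd hpn (Nat.dvd_of_mem_primeFactors hpa)
    rw [Nat.Coprime] at h
    rw [h] at hd
    exact hp.ne_one (Nat.dvd_one.mp hd)
  · intro h
    rw [← Nat.disjoint_primeFactors hn ha.ne', Finset.disjoint_left]
    intro p hpn hpa
    exact h hpa (Nat.dvd_of_mem_primeFactors hpn)

/-- Let `χ` be completely multiplicative with `|χ(n)| ≤ 1` and `a` a positive integer.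
Then for `z ≥ 1`,
`Σ_{n ≤ z, (n,a)=1} χ(n)/n = Π_{p ∣ a} (1 − χ(p)/p) · Σ_{n ≤ z} χ(n)/n
  + O((a/φ(a)) Σ_{p ∣ a} (log p)/p)` with an absolute implied constant. -/
theorem coprime_sum_eq_euler_product_mul_sum :
    ∃ C : ℝ, 0 < C ∧ ∀ (χ : ℕ → ℂ), χ 1 = 1 → (∀ m n : ℕ, χ (m * n) = χ m * χ n) →
      (∀ n : ℕ, ‖χ n‖ ≤ 1) → ∀ a : ℕ, 0 < a → ∀ z : ℝ, 1 ≤ z →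
      ‖(∑ n ∈ (Finset.Icc 1 ⌊z⌋₊).filter (fun n => n.Coprime a), χ n / (n : ℂ))
          - (∏ p ∈ a.primeFactors, (1 - χ p / (p : ℂ)))
              * ∑ n ∈ Finset.Icc 1 ⌊z⌋₊, χ n / (n : ℂ)‖
        ≤ C * ((a : ℝ) / (Nat.totient a : ℝ)) * ∑ p ∈ a.primeFactors, Real.log p / p := by
  classical
  refine ⟨3, by norm_num, ?_⟩
  intro χ h1 hmul hle a ha z hz
  set P := a.primeFactors with hP
  set N := ⌊z⌋₊ with hNdef
  have hN : 1 ≤ N := Nat.le_floor (by exact_mod_cast hz)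
  set S : ℕ → ℂ := fun M => ∑ n ∈ Finset.Icc 1 M, χ n / (n : ℂ) with hS
  set D : Finset ℕ → ℕ := fun T => ∏ p ∈ T, p with hD
  set w : Finset ℕ → ℂ := fun T => ∏ p ∈ T, (-(χ p) / p) with hw
  have hDpos : ∀ T : Finset ℕ, T ∈ P.powerset → 0 < D T := by
    intro T hT
    refine Finset.prod_pos fun p hp => ?_
    exact (Nat.prime_of_mem_primeFactors (Finset.mem_powerset.mp hT hp)).pos
  -- Step A
  have hA : ∑ n ∈ (Finset.Icc 1 N).filter (fun n => n.Coprime a), χ n / (n : ℂ)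
      = ∑ T ∈ P.powerset, w T * S (N / D T) := by
    have e0 : ∑ n ∈ (Finset.Icc 1 N).filter (fun n => n.Coprime a), χ n / (n : ℂ)
        = ∑ n ∈ Finset.Icc 1 N, (χ n / (n : ℂ)) * (if n.Coprime a then 1 else 0) := by
      rw [Finset.sum_filter]
      refine Finset.sum_congr rfl fun n hn => ?_
      rw [mul_ite, mul_one, mul_zero]
    rw [e0]
    have e1 : ∀ n ∈ Finset.Icc 1 N,
        (χ n / (n : ℂ)) * (if n.Coprime a then 1 else 0)
          = ∑ T ∈ P.powerset, (-1:ℂ)^T.card *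
              ((χ n / (n : ℂ)) * (if D T ∣ n then 1 else 0)) := by
      intro n hn
      have hn0 : n ≠ 0 := by
        have := (Finset.mem_Icc.mp hn).1
        omega
      rw [aux_indicator a ha n hn0, Finset.mul_sum]
      refine Finset.sum_congr rfl fun T hT => ?_
      ring
    rw [Finset.sum_congr rfl e1, Finset.sum_comm]
    refine Finset.sum_congr rfl fun T hT => ?_
    rw [← Finset.mul_sum]
    have e2 : ∑ n ∈ Finset.Icc 1 N, (χ n / (n : ℂ)) * (if D T ∣ n then 1 else 0)
        = ∑ n ∈ (Finset.Icc 1 N).filter (fun n => D T ∣ n), χ n / (n : ℂ) := by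
      rw [Finset.sum_filter]
      refine Finset.sum_congr rfl fun n hn => ?_
      rw [mul_ite, mul_one, mul_zero]
    rw [e2, aux_reindex χ hmul N (D T) (hDpos T hT)]
    have e3 : (-1:ℂ)^T.card * (χ (D T) / (D T : ℂ)) = w T := by
      have hprimes : ∀ p ∈ T, p.Prime := fun p hp =>
        Nat.prime_of_mem_primeFactors (Finset.mem_powerset.mp hT hp)
      rw [hw, hD]
      simp only
      rw [aux_chi_prod χ h1 hmul T, Nat.cast_prod, ← Finset.prod_div_distrib]
      have : ∀ p ∈ T, -(χ p) / (p:ℂ) = (-1) * (χ p / p) := by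
        intro p hp; ring
      rw [Finset.prod_congr rfl this, Finset.prod_mul_distrib, Finset.prod_const]
    rw [← e3, mul_assoc]
  -- Step B
  have hB : (∏ p ∈ P, (1 - χ p / (p : ℂ))) * S N = ∑ T ∈ P.powerset, w T * S N := by
    have e : ∀ p ∈ P, 1 - χ p / (p:ℂ) = (-(χ p) / p) + 1 := by intro p _; ring
    rw [Finset.prod_congr rfl e, Finset.prod_add, Finset.sum_mul]
    refine Finset.sum_congr rfl fun T hT => ?_
    rw [Finset.prod_const_one, mul_one]
  rw [hA, hB, ← Finset.sum_sub_distrib]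
  have hterm : ∀ T ∈ P.powerset,
      ‖w T * S (N / D T) - w T * S N‖
        ≤ 3 * (∑ p ∈ T, Real.log p) * ∏ p ∈ T, (p : ℝ)⁻¹ := by
    intro T hT
    by_cases hTe : T = ∅
    · subst hTe
      simp [hw, hD, Finset.prod_empty, Nat.div_one]
    · have hprimes : ∀ p ∈ T, p.Prime := fun p hp =>
        Nat.prime_of_mem_primeFactors (Finset.mem_powerset.mp hT hp)
      have hD1 : 1 ≤ D T := hDpos T hT
      have hL : Real.log 2 ≤ ∑ p ∈ T, Real.log p := by
        obtain ⟨q, hq⟩ := Finset.nonempty_iff_ne_empty.mpr hTe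
        have h2q : (2:ℝ) ≤ q := by exact_mod_cast (hprimes q hq).two_le
        calc Real.log 2 ≤ Real.log q := Real.log_le_log (by norm_num) h2q
          _ ≤ ∑ p ∈ T, Real.log p := Finset.single_le_sum
              (fun p hp => Real.log_nonneg (by exact_mod_cast (hprimes p hp).one_lt.le)) hq
      have hLhalf : (1:ℝ)/2 ≤ ∑ p ∈ T, Real.log p := by
        have := Real.log_two_gt_d9
        linarith
      have bound1 : ‖w T‖ ≤ ∏ p ∈ T, (p : ℝ)⁻¹ := by
        rw [hw]
        simp only
        rw [norm_prod]
        refine Finset.prod_le_prod (fun p _ => norm_nonneg _) fun p hp => ?_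
        rw [norm_div, norm_neg, Complex.norm_natCast, inv_eq_one_div]
        have hp0 : (0:ℝ) < p := by exact_mod_cast (hprimes p hp).pos
        gcongr
        exact hle p
      have bound2 : ‖S (N / D T) - S N‖ ≤ 1 + ∑ p ∈ T, Real.log p := by
        have hsplit : S (N / D T) - S N = -∑ n ∈ Finset.Ioc (N / D T) N, χ n / (n:ℂ) := by
          have h := Finset.sum_Ioc_consecutive (fun n : ℕ => χ n / (n:ℂ))
            (Nat.zero_le (N / D T)) (Nat.div_le_self N (D T))
          rw [hS]
          simp only
          rw [show Finset.Icc 1 (N / D T) = Finset.Ioc 0 (N / D T) from rfl,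
            show Finset.Icc 1 N = Finset.Ioc 0 N from rfl]
          linear_combination h
        rw [hsplit, norm_neg]
        refine (aux_tail χ hle N (D T) hN hD1).trans ?_
        have : Real.log (D T) = ∑ p ∈ T, Real.log p := by
          rw [hD]
          simp only
          rw [Nat.cast_prod, Real.log_prod]
          intro p hp
          exact_mod_cast (hprimes p hp).pos.ne'
        rw [this]
      have hprodnn : (0:ℝ) ≤ ∏ p ∈ T, (p : ℝ)⁻¹ :=
        Finset.prod_nonneg fun p _ => by positivity
      calc ‖w T * S (N / D T) - w T * S N‖ = ‖w T‖ * ‖S (N / D T) - S N‖ := by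
            rw [← mul_sub, norm_mul]
        _ ≤ (∏ p ∈ T, (p : ℝ)⁻¹) * (1 + ∑ p ∈ T, Real.log p) :=
            mul_le_mul bound1 bound2 (norm_nonneg _) hprodnn
        _ ≤ (∏ p ∈ T, (p : ℝ)⁻¹) * (3 * ∑ p ∈ T, Real.log p) := by
            refine mul_le_mul_of_nonneg_left (by linarith) hprodnn
        _ = 3 * (∑ p ∈ T, Real.log p) * ∏ p ∈ T, (p : ℝ)⁻¹ := by ring
  refine (norm_sum_le _ _).trans ((Finset.sum_le_sum hterm).trans ?_)
  have hprimesP : ∀ p ∈ P, p.Prime := fun p hp => Nat.prime_of_mem_primeFactors hp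
  have hswap : ∑ T ∈ P.powerset, (∑ p ∈ T, Real.log p) * ∏ q ∈ T, (q:ℝ)⁻¹
      = ∑ p ∈ P, Real.log p
          * ∑ T ∈ P.powerset.filter (fun T => p ∈ T), ∏ q ∈ T, (q:ℝ)⁻¹ := by
    have e1 : ∀ T ∈ P.powerset, (∑ p ∈ T, Real.log p) * ∏ q ∈ T, (q:ℝ)⁻¹
        = ∑ p ∈ P, (if p ∈ T then Real.log p * ∏ q ∈ T, (q:ℝ)⁻¹ else 0) := by
      intro T hT
      rw [Finset.sum_ite_mem, Finset.inter_eq_right.mpr (Finset.mem_powerset.mp hT),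
        ← Finset.sum_mul]
    rw [Finset.sum_congr rfl e1, Finset.sum_comm]
    refine Finset.sum_congr rfl fun p hp => ?_
    rw [Finset.mul_sum, Finset.sum_filter]
  have hinner : ∀ p ∈ P, ∑ T ∈ P.powerset.filter (fun T => p ∈ T), ∏ q ∈ T, (q:ℝ)⁻¹
      = (p:ℝ)⁻¹ * ∏ q ∈ P.erase p, (1 + (q:ℝ)⁻¹) := by
    intro p hp
    have e2 : ∑ T ∈ P.powerset.filter (fun T => p ∈ T), ∏ q ∈ T, (q:ℝ)⁻¹
        = ∑ T' ∈ (P.erase p).powerset, (p:ℝ)⁻¹ * ∏ q ∈ T', (q:ℝ)⁻¹ := by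
      refine Finset.sum_bij' (fun T _ => T.erase p) (fun T' _ => insert p T') ?_ ?_ ?_ ?_ ?_
      · intro T hT
        rw [Finset.mem_filter, Finset.mem_powerset] at hT
        rw [Finset.mem_powerset]
        exact Finset.erase_subset_erase p hT.1
      · intro T' hT'
        rw [Finset.mem_powerset] at hT'
        rw [Finset.mem_filter, Finset.mem_powerset]
        exact ⟨Finset.insert_subset hp (hT'.trans (Finset.erase_subset p P)),
          Finset.mem_insert_self p T'⟩
      · intro T hT
        rw [Finset.mem_filter] at hT
        exact Finset.insert_erase hT.2
      · intro T' hT'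
        rw [Finset.mem_powerset] at hT'
        exact Finset.erase_insert fun hc => (Finset.notMem_erase p P) (hT' hc)
      · intro T hT
        rw [Finset.mem_filter] at hT
        exact (Finset.mul_prod_erase T _ hT.2).symm
    rw [e2, ← Finset.mul_sum]
    congr 1
    have h3 := Finset.prod_add (fun q : ℕ => (q:ℝ)⁻¹) (fun _ => (1:ℝ)) (P.erase p)
    simp only [Finset.prod_const_one, mul_one] at h3
    rw [← h3]
    exact Finset.prod_congr rfl fun q _ => add_comm _ _
  have hphipos : (0:ℝ) < (Nat.totient a : ℝ) := by exact_mod_cast Nat.totient_pos.mpr ha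
  have hphi : ∏ q ∈ P, (1 + (q:ℝ)⁻¹) ≤ (a:ℝ) / (Nat.totient a : ℝ) := by
    have htot := Nat.totient_eq_mul_prod_factors a
    have htotR : (Nat.totient a : ℝ) = (a:ℝ) * ∏ p ∈ P, (1 - (p:ℝ)⁻¹) := by
      have := congrArg (fun q : ℚ => (q : ℝ)) htot
      push_cast at this
      exact this
    have hfac : ∀ p ∈ P, (0:ℝ) < 1 - (p:ℝ)⁻¹ := by
      intro p hp
      have h2 : (2:ℝ) ≤ p := by exact_mod_cast (hprimesP p hp).two_le
      have : (p:ℝ)⁻¹ ≤ 2⁻¹ := by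
        apply inv_anti₀ (by norm_num) h2
      linarith
    have hApos : 0 < ∏ p ∈ P, (1 - (p:ℝ)⁻¹) := Finset.prod_pos hfac
    have hmul1 : (∏ q ∈ P, (1 + (q:ℝ)⁻¹)) * ∏ p ∈ P, (1 - (p:ℝ)⁻¹) ≤ 1 := by
      rw [← Finset.prod_mul_distrib]
      refine Finset.prod_le_one (fun p hp => ?_) (fun p hp => ?_)
      · have hp0 : (0:ℝ) < p := by exact_mod_cast (hprimesP p hp).pos
        have h2 : (0:ℝ) < (p:ℝ)⁻¹ := by positivity
        nlinarith [hfac p hp]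
      · have hp0 : (0:ℝ) < p := by exact_mod_cast (hprimesP p hp).pos
        have h2 : (0:ℝ) < (p:ℝ)⁻¹ := by positivity
        nlinarith [hfac p hp, sq_nonneg ((p:ℝ)⁻¹)]
    have ha0 : (0:ℝ) < a := by exact_mod_cast ha
    rw [htotR]
    have key : (a:ℝ) / ((a:ℝ) * ∏ p ∈ P, (1 - (p:ℝ)⁻¹))
        = (∏ p ∈ P, (1 - (p:ℝ)⁻¹))⁻¹ := by
      rw [div_mul_eq_div_div, div_self ha0.ne', one_div]
    rw [key, inv_eq_one_div, le_div_iff₀ hApos]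
    exact hmul1
  have herase : ∀ p ∈ P, ∏ q ∈ P.erase p, (1 + (q:ℝ)⁻¹)
      ≤ (a:ℝ) / (Nat.totient a : ℝ) := by
    intro p hp
    refine le_trans ?_ hphi
    have hpos : 0 < ∏ q ∈ P.erase p, (1 + (q:ℝ)⁻¹) :=
      Finset.prod_pos fun q hq => by positivity
    have hsplit := Finset.mul_prod_erase P (fun q => 1 + (q:ℝ)⁻¹) hp
    rw [← hsplit]
    have hp1 : (1:ℝ) ≤ 1 + (p:ℝ)⁻¹ := by
      have : (0:ℝ) ≤ (p:ℝ)⁻¹ := by positivity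
      linarith
    exact le_mul_of_one_le_left hpos.le hp1
  calc ∑ T ∈ P.powerset, 3 * (∑ p ∈ T, Real.log p) * ∏ p ∈ T, (p:ℝ)⁻¹
      = 3 * ∑ T ∈ P.powerset, (∑ p ∈ T, Real.log p) * ∏ q ∈ T, (q:ℝ)⁻¹ := by
        rw [Finset.mul_sum]
        exact Finset.sum_congr rfl fun T _ => by ring
    _ = 3 * ∑ p ∈ P, Real.log p * ((p:ℝ)⁻¹ * ∏ q ∈ P.erase p, (1 + (q:ℝ)⁻¹)) := by
        rw [hswap]
        congr 1
        exact Finset.sum_congr rfl fun p hp => by rw [hinner p hp]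
    _ ≤ 3 * ∑ p ∈ P, (Real.log p / p) * ((a:ℝ) / (Nat.totient a : ℝ)) := by
        refine mul_le_mul_of_nonneg_left (Finset.sum_le_sum fun p hp => ?_) (by norm_num)
        have hlognn : 0 ≤ Real.log p :=
          Real.log_nonneg (by exact_mod_cast (hprimesP p hp).one_lt.le)
        have hpinv : (0:ℝ) ≤ (p:ℝ)⁻¹ := by positivity
        calc Real.log p * ((p:ℝ)⁻¹ * ∏ q ∈ P.erase p, (1 + (q:ℝ)⁻¹))
            = (Real.log p * (p:ℝ)⁻¹) * ∏ q ∈ P.erase p, (1 + (q:ℝ)⁻¹) := by ring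
          _ ≤ (Real.log p * (p:ℝ)⁻¹) * ((a:ℝ) / (Nat.totient a : ℝ)) :=
              mul_le_mul_of_nonneg_left (herase p hp) (mul_nonneg hlognn hpinv)
          _ = (Real.log p / p) * ((a:ℝ) / (Nat.totient a : ℝ)) := by
              ring
    _ = 3 * ((a:ℝ) / (Nat.totient a : ℝ)) * ∑ p ∈ P, Real.log p / p := by
        rw [← Finset.sum_mul]
        ring
end

section
/- With P(u) := e^{−γ} ∫₀^u ρ(t) dt, where ρ is the Dickman–de Bruijn function, one has lim_{u→∞} P(u) = 1, i.e. ∫₀^∞ ρ(t) dt = e^γ. -/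
set_option maxHeartbeats 1000000

open Filter MeasureTheory Set Real

lemma abs_log_le (t : ℝ) (ht0 : 0 < t) : |Real.log t| ≤ 2 * t ^ ((1:ℝ)/2 - 1) + t ^ ((2:ℝ)-1) := by
  rw [show ((2:ℝ)-1) = 1 by norm_num, Real.rpow_one]
  rcases le_or_gt 1 t with h | h
  · rw [abs_of_nonneg (Real.log_nonneg h)]
    have h1 : Real.log t ≤ t - 1 := Real.log_le_sub_one_of_pos ht0
    have h3 : (0:ℝ) ≤ 2 * t ^ ((1:ℝ)/2-1) := by positivity
    linarith
  · rw [abs_of_nonpos (Real.log_nonpos ht0.le h.le)]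
    set x := t ^ ((1:ℝ)/2) with hxdef
    have hx : 0 < x := Real.rpow_pos_of_pos ht0 _
    have hlogx : Real.log x = (1/2) * Real.log t := Real.log_rpow ht0 _
    have h1 : Real.log x⁻¹ ≤ x⁻¹ - 1 := Real.log_le_sub_one_of_pos (inv_pos.mpr hx)
    rw [Real.log_inv, hlogx] at h1
    have h2 : t ^ ((1:ℝ)/2 - 1) = x⁻¹ := by
      rw [hxdef, show (1:ℝ)/2-1 = -(1/2) by norm_num, Real.rpow_neg ht0.le]
    rw [h2]; linarith

lemma integrable_log_exp : IntegrableOn (fun t : ℝ => Real.log t * Real.exp (-t)) (Ioi 0) := by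
  have h1 : IntegrableOn (fun x : ℝ => Real.exp (-x) * x ^ ((1:ℝ)/2 - 1)) (Ioi 0) :=
    Real.GammaIntegral_convergent (by norm_num)
  have h2 : IntegrableOn (fun x : ℝ => Real.exp (-x) * x ^ ((2:ℝ) - 1)) (Ioi 0) :=
    Real.GammaIntegral_convergent (by norm_num)
  have hbound : IntegrableOn (fun x : ℝ => 2 * (Real.exp (-x) * x ^ ((1:ℝ)/2 - 1)) + Real.exp (-x) * x ^ ((2:ℝ) - 1)) (Ioi 0) := (h1.const_mul 2).add h2
  refine hbound.integrable.mono ?_ ?_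
  · refine (ContinuousOn.mul ?_ ?_).aestronglyMeasurable measurableSet_Ioi
    · exact Real.continuousOn_log.mono (by intro x hx; exact ne_of_gt hx)
    · exact (Real.continuous_exp.comp continuous_neg).continuousOn
  · filter_upwards [ae_restrict_mem measurableSet_Ioi] with t ht
    have ht0 : (0:ℝ) < t := ht
    rw [Real.norm_eq_abs, Real.norm_eq_abs, abs_mul, abs_of_pos (Real.exp_pos _)]
    have : |Real.log t| * Real.exp (-t) ≤ (2 * t ^ ((1:ℝ)/2 - 1) + t ^ ((2:ℝ)-1)) * Real.exp (-t) :=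
      mul_le_mul_of_nonneg_right (abs_log_le t ht0) (Real.exp_pos _).le
    refine this.trans (le_trans (le_of_eq (by ring)) (le_abs_self _))

lemma integral_log_exp : ∫ t in Ioi (0:ℝ), Real.log t * Real.exp (-t) = -Real.eulerMascheroniConstant := by
  have hd := Complex.hasDerivAt_GammaIntegral (s := 1) (by norm_num)
  have hval : (∫ t : ℝ in Ioi 0, (t:ℂ) ^ ((1:ℂ) - 1) * ((Real.log t : ℂ) * (Real.exp (-t) : ℂ)))
      = ((∫ t : ℝ in Ioi 0, Real.log t * Real.exp (-t) : ℝ) : ℂ) := by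
    rw [show (∫ t : ℝ in Ioi 0, (t:ℂ) ^ ((1:ℂ) - 1) * ((Real.log t : ℂ) * (Real.exp (-t) : ℂ)))
        = ∫ t : ℝ in Ioi 0, ((Real.log t * Real.exp (-t) : ℝ) : ℂ) from
      setIntegral_congr_fun measurableSet_Ioi fun t ht => by
        rw [show ((1:ℂ)-1) = 0 by ring, Complex.cpow_zero, one_mul]; push_cast; ring]
    exact integral_ofReal
  rw [hval] at hd
  have heq : Complex.GammaIntegral =ᶠ[nhds (1:ℂ)] Complex.Gamma := by
    have : {s : ℂ | 0 < s.re} ∈ nhds (1:ℂ) :=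
      IsOpen.mem_nhds (isOpen_lt continuous_const Complex.continuous_re) (by norm_num)
    filter_upwards [this] with s hs
    exact (Complex.Gamma_eq_integral hs).symm
  have hd2 : HasDerivAt Complex.Gamma (((∫ t : ℝ in Ioi 0, Real.log t * Real.exp (-t) : ℝ) : ℂ)) 1 :=
    hd.congr_of_eventuallyEq heq.symm
  have hd3 := hd2.real_of_complex
  have hrg : (fun x : ℝ => (Complex.Gamma (x:ℂ)).re) = Real.Gamma := by
    funext x; rw [Complex.Gamma_ofReal]; simp
  rw [hrg] at hd3
  have := hd3.unique Real.hasDerivAt_Gamma_one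
  simpa using this

noncomputable def hfun (t : ℝ) : ℝ := (1 - Real.exp (-t)) / t

lemma one_sub_exp_neg_le {t : ℝ} : 1 - Real.exp (-t) ≤ t := by
  have := Real.add_one_le_exp (-t); linarith

lemma one_sub_exp_neg_nonneg {t : ℝ} (ht : 0 ≤ t) : 0 ≤ 1 - Real.exp (-t) := by
  have : Real.exp (-t) ≤ 1 := Real.exp_le_one_iff.mpr (by linarith)
  linarith

lemma hfun_nonneg {t : ℝ} (ht : 0 ≤ t) : 0 ≤ hfun t :=
  div_nonneg (one_sub_exp_neg_nonneg ht) ht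

lemma hfun_le_one {t : ℝ} (ht : 0 ≤ t) : hfun t ≤ 1 := by
  rcases eq_or_lt_of_le ht with h | h
  · simp [hfun, ← h]
  · rw [hfun, div_le_one h]; exact one_sub_exp_neg_le

lemma hfun_continuousOn : ContinuousOn hfun (Ioi 0) :=
  ContinuousOn.div
    (continuous_const.sub (Real.continuous_exp.comp continuous_neg)).continuousOn
    continuous_id.continuousOn (fun x hx => ne_of_gt hx)

lemma hfun_integrableOn (b : ℝ) : IntegrableOn hfun (Ioc 0 b) := by
  have hmeas : AEStronglyMeasurable hfun (volume.restrict (Ioc (0:ℝ) b)) :=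
    (hfun_continuousOn.mono Ioc_subset_Ioi_self).aestronglyMeasurable measurableSet_Ioc
  refine Integrable.mono ((integrableOn_const (C := (1:ℝ)) (μ := volume)
    (s := Ioc (0:ℝ) b) measure_Ioc_lt_top.ne)) hmeas ?_
  filter_upwards [ae_restrict_mem measurableSet_Ioc] with t ht
  rw [Real.norm_eq_abs, abs_of_nonneg (hfun_nonneg ht.1.le)]
  simpa using hfun_le_one ht.1.le

lemma hfun_intervalIntegrable {a b : ℝ} (ha : 0 ≤ a) (hb : 0 ≤ b) :
    IntervalIntegrable hfun volume a b :=
  ⟨(hfun_integrableOn b).mono_set (Ioc_subset_Ioc_left ha),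
   (hfun_integrableOn a).mono_set (Ioc_subset_Ioc_left hb)⟩

lemma ibp_identity {s : ℝ} (hs : 0 ≤ s) :
    (∫ t in (0:ℝ)..s, (Real.log t * Real.exp (-t) + hfun t))
      = (1 - Real.exp (-s)) * Real.log s := by
  have key := intervalIntegral.integral_eq_sub_of_hasDeriv_right_of_le (E := ℝ)
    (f := fun t => (1 - Real.exp (-t)) * Real.log t)
    (f' := fun t => Real.log t * Real.exp (-t) + hfun t) hs ?_ ?_ ?_
  · rw [key]; simp
  · -- continuity on Icc 0 s
    intro t htm
    rcases eq_or_ne t 0 with rfl | htne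
    · -- continuity at 0
      unfold ContinuousWithinAt
      rw [show ((fun t : ℝ => (1 - Real.exp (-t)) * Real.log t) 0) = 0 by simp]
      have hb : ∀ᶠ x in nhdsWithin (0:ℝ) (Icc 0 s),
          ‖(1 - Real.exp (-x)) * Real.log x‖ ≤ |Real.log x * x| := by
        filter_upwards [self_mem_nhdsWithin] with x hx
        have hx0 : (0:ℝ) ≤ x := hx.1
        rw [Real.norm_eq_abs, abs_mul, abs_mul, mul_comm |Real.log x| |x|]
        refine mul_le_mul_of_nonneg_right ?_ (abs_nonneg _)
        rw [abs_of_nonneg (one_sub_exp_neg_nonneg hx0), abs_of_nonneg hx0]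
        exact one_sub_exp_neg_le
      refine squeeze_zero_norm' hb ?_
      have h1 : Tendsto (fun x : ℝ => Real.log x * x) (nhdsWithin 0 (Ioi 0)) (nhds 0) := by
        simpa using tendsto_log_mul_rpow_nhdsGT_zero (r := 1) one_pos
      have h2 : Tendsto (fun x : ℝ => |Real.log x * x|) (nhdsWithin 0 (Ici 0)) (nhds 0) := by
        rw [show (Ici (0:ℝ)) = insert 0 (Ioi 0) by rw [Ioi_insert]]
        rw [nhdsWithin_insert, tendsto_sup]
        constructor
        · have := tendsto_pure_nhds (fun x : ℝ => |Real.log x * x|) 0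
          simpa using this
        · simpa using h1.abs
      exact h2.mono_left (nhdsWithin_mono 0 (Icc_subset_Ici_self))
    · have ht0 : 0 < t := lt_of_le_of_ne htm.1 (Ne.symm htne)
      refine ContinuousAt.continuousWithinAt ?_
      exact ((continuous_const.sub (Real.continuous_exp.comp continuous_neg)).continuousAt).mul
        (Real.continuousAt_log htne)
  · -- derivative on Ioo
    intro x hx
    have hx0 : 0 < x := hx.1
    have h1 : HasDerivAt (fun t : ℝ => 1 - Real.exp (-t)) (Real.exp (-x)) x := by
      have := ((Real.hasDerivAt_exp (-x)).comp x (hasDerivAt_neg x)).const_sub 1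
      simpa using this
    have h2 : HasDerivAt Real.log x⁻¹ x := Real.hasDerivAt_log (ne_of_gt hx0)
    have := h1.mul h2
    have heq : Real.exp (-x) * Real.log x + (1 - Real.exp (-x)) * x⁻¹
        = Real.log x * Real.exp (-x) + hfun x := by
      rw [hfun, div_eq_mul_inv]; ring
    rw [heq] at this
    exact this.hasDerivWithinAt
  · -- interval integrability of f'
    rw [intervalIntegrable_iff_integrableOn_Ioc_of_le hs]
    exact (integrable_log_exp.mono_set Ioc_subset_Ioi_self).add (hfun_integrableOn s)

lemma tendsto_hfun_integral_sub_log :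
    Tendsto (fun s : ℝ => (∫ t in (0:ℝ)..s, hfun t) - Real.log s) atTop
      (nhds Real.eulerMascheroniConstant) := by
  have hsplit : ∀ s : ℝ, (1:ℝ) ≤ s →
      (∫ t in (0:ℝ)..s, hfun t) - Real.log s
        = -(Real.exp (-s) * Real.log s) - ∫ t in (0:ℝ)..s, Real.log t * Real.exp (-t) := by
    intro s hs1
    have hs : (0:ℝ) ≤ s := le_trans zero_le_one hs1
    have hii1 : IntervalIntegrable (fun t => Real.log t * Real.exp (-t)) volume 0 s := by
      rw [intervalIntegrable_iff_integrableOn_Ioc_of_le hs]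
      exact integrable_log_exp.mono_set Ioc_subset_Ioi_self
    have hii2 : IntervalIntegrable hfun volume 0 s := hfun_intervalIntegrable le_rfl hs
    have hadd := intervalIntegral.integral_add hii1 hii2
    have := ibp_identity hs
    rw [hadd] at this
    have hring : (1 - Real.exp (-s)) * Real.log s - Real.log s = -(Real.exp (-s) * Real.log s) := by ring
    linarith [this, hring]
  have h1 : Tendsto (fun s : ℝ => ∫ t in (0:ℝ)..s, Real.log t * Real.exp (-t)) atTop
      (nhds (-Real.eulerMascheroniConstant)) := by
    rw [← integral_log_exp]
    exact intervalIntegral_tendsto_integral_Ioi 0 integrable_log_exp tendsto_id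
  have h2 : Tendsto (fun s : ℝ => Real.exp (-s) * Real.log s) atTop (nhds 0) := by
    apply squeeze_zero' (g := fun s => s * Real.exp (-s))
    · filter_upwards [eventually_ge_atTop (1:ℝ)] with s hs
      exact mul_nonneg (Real.exp_pos _).le (Real.log_nonneg hs)
    · filter_upwards [eventually_ge_atTop (1:ℝ)] with s hs
      have : Real.log s ≤ s := (Real.log_le_sub_one_of_pos (by linarith)).trans (by linarith)
      calc Real.exp (-s) * Real.log s ≤ Real.exp (-s) * s :=
            mul_le_mul_of_nonneg_left this (Real.exp_pos _).le
        _ = s * Real.exp (-s) := mul_comm _ _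
    · simpa using tendsto_pow_mul_exp_neg_atTop_nhds_zero 1
  have h3 : Tendsto (fun s : ℝ => -(Real.exp (-s) * Real.log s)
      - ∫ t in (0:ℝ)..s, Real.log t * Real.exp (-t)) atTop
      (nhds Real.eulerMascheroniConstant) := by
    have := (h2.neg).sub h1
    simpa using this
  refine h3.congr' ?_
  filter_upwards [eventually_ge_atTop (1:ℝ)] with s hs
  exact (hsplit s hs).symm

section Rho
variable (ρ : ℝ → ℝ) (hcont : ContinuousOn ρ (Set.Ici 0))
  (hinit : ∀ t ∈ Set.Icc (0 : ℝ) 1, ρ t = 1)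
  (hode : ∀ u : ℝ, 1 < u → HasDerivAt ρ (-ρ (u - 1) / u) u)

include hcont in
lemma rho_ii {a b : ℝ} (ha : 0 ≤ a) (hb : 0 ≤ b) : IntervalIntegrable ρ volume a b := by
  refine (hcont.mono ?_).intervalIntegrable
  intro x hx
  exact le_trans (le_min ha hb) hx.1

include hcont in
lemma rho_prim {x : ℝ} (hx : 0 < x) :
    HasDerivAt (fun u => ∫ t in (0:ℝ)..u, ρ t) (ρ x) x :=
  intervalIntegral.integral_hasDerivAt_right (rho_ii ρ hcont le_rfl hx.le)
    ⟨Ioi 0, Ioi_mem_nhds hx, (hcont.mono Ioi_subset_Ici_self).aestronglyMeasurable measurableSet_Ioi⟩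
    (hcont.continuousAt (Ici_mem_nhds hx))

include hcont hinit hode in
lemma rho_funeq : ∀ u : ℝ, 1 ≤ u → u * ρ u = ∫ t in (u-1)..u, ρ t := by
  have hinit1 : ρ 1 = 1 := hinit 1 ⟨zero_le_one, le_rfl⟩
  have hP1 : (∫ t in (0:ℝ)..1, ρ t) = 1 := by
    rw [intervalIntegral.integral_congr (g := fun _ => (1:ℝ))
      (fun t ht => hinit t (by rwa [uIcc_of_le zero_le_one] at ht))]
    simp
  intro u hu
  rcases eq_or_lt_of_le hu with rfl | hu1
  · rw [show (1:ℝ) - 1 = 0 by ring, hP1, hinit1]; ring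
  set g : ℝ → ℝ := fun v => v * ρ v - (∫ t in (0:ℝ)..v, ρ t) + ∫ t in (0:ℝ)..(v-1), ρ t with hg
  have hgder : ∀ x : ℝ, 1 < x → HasDerivAt g 0 x := by
    intro x hx
    have hx0 : (0:ℝ) < x := lt_trans one_pos hx
    have hd1 : HasDerivAt (fun v : ℝ => v * ρ v) (1 * ρ x + x * (-ρ (x-1) / x)) x :=
      (hasDerivAt_id x).mul (hode x hx)
    have hd2 := rho_prim ρ hcont hx0
    have hd3 : HasDerivAt (fun v : ℝ => ∫ t in (0:ℝ)..(v-1), ρ t) (ρ (x-1)) x := by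
      have := (rho_prim ρ hcont (x := x - 1) (by linarith)).comp x
        ((hasDerivAt_id x).sub_const 1)
      exact this.congr_deriv (mul_one _)
    have hsum := (hd1.sub hd2).add hd3
    exact hsum.congr_deriv (by linear_combination (-ρ (x-1)) * (mul_inv_cancel₀ hx0.ne'))
  have hconst : ∀ a, 1 < a → a ≤ u → g u = g a := by
    intro a ha hau
    exact constant_of_has_deriv_right_zero
      (fun x hx => ((hgder x (lt_of_lt_of_le ha hx.1)).continuousAt).continuousWithinAt)
      (fun x hx => ((hgder x (lt_of_lt_of_le ha hx.1))).hasDerivWithinAt)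
      u ⟨hau, le_rfl⟩
  have hg1 : Tendsto g (nhdsWithin 1 (Ioi 1)) (nhds 0) := by
    have hA : Tendsto (fun v : ℝ => v * ρ v) (nhdsWithin 1 (Ioi 1)) (nhds (1 * ρ 1)) := by
      have hρ : ContinuousWithinAt ρ (Ioi 1) 1 :=
        (hcont 1 (by norm_num)).mono (fun x hx => mem_Ici.mpr (le_of_lt (lt_of_le_of_lt zero_le_one hx)))
      exact (continuousWithinAt_id.mul hρ)
    have hB : Tendsto (fun v : ℝ => ∫ t in (0:ℝ)..v, ρ t) (nhdsWithin 1 (Ioi 1))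
        (nhds (∫ t in (0:ℝ)..1, ρ t)) :=
      ((rho_prim ρ hcont one_pos).continuousAt).continuousWithinAt
    have hC : Tendsto (fun v : ℝ => ∫ t in (0:ℝ)..(v-1), ρ t) (nhdsWithin 1 (Ioi 1)) (nhds 0) := by
      have heq : ∀ᶠ v in nhdsWithin (1:ℝ) (Ioi 1), (∫ t in (0:ℝ)..(v-1), ρ t) = v - 1 := by
        filter_upwards [Ioo_mem_nhdsGT_of_mem (⟨le_rfl, one_lt_two⟩ : (1:ℝ) ∈ Ico 1 2)]
          with v hv
        rw [intervalIntegral.integral_congr (g := fun _ => (1:ℝ)) (fun t ht => by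
          rw [uIcc_of_le (by linarith [hv.1] : (0:ℝ) ≤ v - 1)] at ht
          exact hinit t ⟨ht.1, le_trans ht.2 (by linarith [hv.2])⟩)]
        simp
      have : Tendsto (fun v : ℝ => v - 1) (nhdsWithin 1 (Ioi 1)) (nhds 0) := by
        have h := (Filter.tendsto_id (x := nhdsWithin (1:ℝ) (Ioi 1))).mono_right
          nhdsWithin_le_nhds
        have := h.sub (tendsto_const_nhds (x := (1:ℝ)))
        simpa using this
      exact this.congr' (heq.mono fun v hv => hv.symm)
    have := (hA.sub hB).add hC
    rw [hinit1, hP1] at this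
    simpa using this
  have hgu : Tendsto g (nhdsWithin 1 (Ioi 1)) (nhds (g u)) := by
    refine tendsto_const_nhds.congr' ?_
    filter_upwards [Ioo_mem_nhdsGT_of_mem (⟨le_rfl, hu1⟩ : (1:ℝ) ∈ Ico 1 u)] with a ha
    exact (hconst a ha.1 ha.2.le)
  have hgu0 : g u = 0 := tendsto_nhds_unique hgu hg1
  have hsub := intervalIntegral.integral_interval_sub_left
    (rho_ii ρ hcont le_rfl (by linarith : (0:ℝ) ≤ u))
    (rho_ii ρ hcont le_rfl (by linarith : (0:ℝ) ≤ u - 1))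
  rw [hg] at hgu0
  simp only at hgu0
  rw [← hsub]
  linarith [hgu0]

include hcont hinit hode in
lemma rho_pos : ∀ u : ℝ, 0 ≤ u → 0 < ρ u := by
  by_contra hc
  push_neg at hc
  obtain ⟨u, hu0, hρu⟩ := hc
  set S : Set ℝ := {v | 1 ≤ v ∧ ρ v ≤ 0} with hS
  have hSclosed : IsClosed S := by
    have : S = Ici 1 ∩ ρ ⁻¹' (Iic 0) := by
      ext v; simp [hS, Set.mem_setOf_eq]
    rw [this]
    exact (hcont.mono (Ici_subset_Ici.mpr zero_le_one)).preimage_isClosed_of_isClosed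
      isClosed_Ici isClosed_Iic
  have hSne : S.Nonempty := by
    refine ⟨u, ?_, hρu⟩
    by_contra hu1
    push_neg at hu1
    have := hinit u ⟨hu0, hu1.le⟩
    linarith
  have hSbdd : BddBelow S := ⟨1, fun v hv => hv.1⟩
  set u0 := sInf S with hu0def
  have hu0mem : u0 ∈ S := hSclosed.csInf_mem hSne hSbdd
  have hu01 : 1 ≤ u0 := hu0mem.1
  have hρ1 : ρ 1 = 1 := hinit 1 ⟨zero_le_one, le_rfl⟩
  have hu0gt : 1 < u0 := by
    rcases eq_or_lt_of_le hu01 with h | h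
    · exfalso
      have : ρ u0 = 1 := by rw [← h]; exact hρ1
      linarith [hu0mem.2]
    · exact h
  have hlt : ∀ v : ℝ, 0 ≤ v → v < u0 → 0 < ρ v := by
    intro v hv0 hvu
    rcases le_or_gt v 1 with h | h
    · rw [hinit v ⟨hv0, h⟩]; exact one_pos
    · by_contra hnp
      push_neg at hnp
      have : v ∈ S := ⟨h.le, hnp⟩
      have := csInf_le hSbdd this
      rw [← hu0def] at this
      linarith
  have hfe := rho_funeq ρ hcont hinit hode u0 hu01
  have hpos : 0 < ∫ t in (u0-1)..u0, ρ t := by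
    refine intervalIntegral.intervalIntegral_pos_of_pos_on
      (rho_ii ρ hcont (by linarith) (by linarith)) ?_ (by linarith)
    intro x hx
    exact hlt x (by linarith [hx.1]) hx.2
  rw [← hfe] at hpos
  nlinarith [hu0mem.2, hpos, hu0gt]

include hcont hinit hode in
lemma rho_antitone : AntitoneOn ρ (Ici 1) := by
  refine antitoneOn_of_deriv_nonpos (convex_Ici 1)
    (hcont.mono (Ici_subset_Ici.mpr zero_le_one)) ?_ ?_
  · rw [interior_Ici]
    exact fun x hx => ((hode x hx).differentiableAt).differentiableWithinAt
  · rw [interior_Ici]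
    intro x hx
    rw [(hode x hx).deriv]
    have h1 : 0 < ρ (x - 1) := rho_pos ρ hcont hinit hode (x-1) (by simp at hx; linarith)
    have h2 : (0:ℝ) < x := by simp at hx; linarith
    exact div_nonpos_iff.mpr (Or.inr ⟨by linarith, h2.le⟩)

include hcont hinit hode in
lemma rho_le_one : ∀ t : ℝ, 0 ≤ t → ρ t ≤ 1 := by
  intro t ht
  rcases le_or_gt t 1 with h | h
  · rw [hinit t ⟨ht, h⟩]
  · have := rho_antitone ρ hcont hinit hode (self_mem_Ici (a := (1:ℝ))) h.le h.le
    rwa [hinit 1 ⟨zero_le_one, le_rfl⟩] at this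

include hcont hinit hode in
lemma rho_decay : ∀ n : ℕ, ∀ u : ℝ, (n:ℝ) + 1 ≤ u → ρ u ≤ (1/2:ℝ)^n := by
  intro n
  induction n with
  | zero => intro u hu; simpa using rho_le_one ρ hcont hinit hode u (by push_cast at hu; linarith)
  | succ n ih =>
    intro u hu
    push_cast at hu
    have hu2 : (2:ℝ) ≤ u := by
      have : (0:ℝ) ≤ n := Nat.cast_nonneg n
      linarith
    have hfe := rho_funeq ρ hcont hinit hode u (by linarith)
    have hmono : ∫ t in (u-1)..u, ρ t ≤ ∫ _t in (u-1)..u, ρ (u-1) := by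
      refine intervalIntegral.integral_mono_on (by linarith)
        (rho_ii ρ hcont (by linarith) (by linarith)) intervalIntegrable_const ?_
      intro x hx
      exact rho_antitone ρ hcont hinit hode (by simp; linarith [hx.1]) (by simp; linarith [hx.1, hx.2]) hx.1
    have hconstint : (∫ _t in (u-1)..u, ρ (u-1)) = ρ (u-1) := by
      rw [intervalIntegral.integral_const]
      simp
    have hρ1 : ρ u ≤ ρ (u-1) / u := by
      rw [le_div_iff₀ (by linarith : (0:ℝ) < u), mul_comm]
      rw [hfe]
      rw [hconstint] at hmono
      exact hmono
    have hihm : ρ (u-1) ≤ (1/2:ℝ)^n := ih (u-1) (by linarith)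
    have hρnn : 0 ≤ ρ (u-1) := (rho_pos ρ hcont hinit hode (u-1) (by linarith)).le
    calc ρ u ≤ ρ (u-1) / u := hρ1
      _ ≤ ρ (u-1) / 2 := by
          apply div_le_div_of_nonneg_left hρnn two_pos hu2
      _ ≤ (1/2:ℝ)^n / 2 := by linarith
      _ = (1/2:ℝ)^(n+1) := by ring

include hcont hinit hode in
lemma rho_le_rpow : ∀ t : ℝ, 0 ≤ t → ρ t ≤ 4 * (1/2:ℝ) ^ (t:ℝ) := by
  intro t ht
  have hhalf : (0:ℝ) < 1/2 := by norm_num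
  rcases le_or_gt t 1 with h | h
  · rw [hinit t ⟨ht, h⟩]
    have h2 : (1/2:ℝ) ^ (1:ℝ) ≤ (1/2:ℝ) ^ (t:ℝ) :=
      Real.rpow_le_rpow_of_exponent_ge hhalf (by norm_num) h
    rw [Real.rpow_one] at h2
    linarith
  · set n := Nat.floor t with hn
    have hn1 : 1 ≤ n := Nat.le_floor (by exact_mod_cast h.le)
    have hfl : (n:ℝ) ≤ t := Nat.floor_le ht
    have hfl2 : t < n + 1 := Nat.lt_floor_add_one t
    have hcast : ((n - 1 : ℕ):ℝ) = (n:ℝ) - 1 := by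
      push_cast [Nat.cast_sub hn1]; ring
    have hdec := rho_decay ρ hcont hinit hode (n-1) t (by rw [hcast]; linarith)
    have hrw : ((1/2:ℝ))^(n-1:ℕ) = (1/2:ℝ) ^ (((n-1:ℕ):ℝ)) := (Real.rpow_natCast _ _).symm
    have hmono : (1/2:ℝ) ^ (((n-1:ℕ):ℝ)) ≤ (1/2:ℝ) ^ (t - 2) := by
      apply Real.rpow_le_rpow_of_exponent_ge hhalf (by norm_num)
      rw [hcast]; linarith
    have hval : (1/2:ℝ) ^ (t - 2) = 4 * (1/2:ℝ) ^ (t:ℝ) := by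
      rw [show t - 2 = t + (-2) by ring, Real.rpow_add hhalf]
      have : (1/2:ℝ) ^ (-2:ℝ) = 4 := by
        rw [show (-2:ℝ) = ((-2 : ℤ):ℝ) by norm_num, Real.rpow_intCast]
        norm_num
      rw [this]; ring
    rw [hrw] at hdec
    linarith [hdec.trans (hmono.trans_eq hval)]

lemma majorant_integrable : IntegrableOn (fun t : ℝ => 4 * (1/2:ℝ) ^ (t:ℝ)) (Ioi 0) := by
  have h : IntegrableOn (fun t : ℝ => Real.exp (-(Real.log 2) * t)) (Ioi 0) :=
    exp_neg_integrableOn_Ioi 0 (Real.log_pos one_lt_two)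
  have heq : (fun t : ℝ => 4 * (1/2:ℝ) ^ (t:ℝ)) = fun t : ℝ => 4 * Real.exp (-(Real.log 2) * t) := by
    funext t
    rw [Real.rpow_def_of_pos (by norm_num : (0:ℝ) < 1/2),
      show Real.log (1/2) = -Real.log 2 by
        rw [show (1/2:ℝ) = 2⁻¹ by norm_num, Real.log_inv],
      neg_mul]
  rw [heq]
  exact h.const_mul 4

include hcont hinit hode in
lemma rho_integrableOn : IntegrableOn ρ (Ioi 0) := by
  refine Integrable.mono majorant_integrable
    ((hcont.mono Ioi_subset_Ici_self).aestronglyMeasurable measurableSet_Ioi) ?_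
  filter_upwards [ae_restrict_mem measurableSet_Ioi] with t ht
  have ht0 : (0:ℝ) < t := ht
  rw [Real.norm_eq_abs, Real.norm_eq_abs,
    abs_of_pos (rho_pos ρ hcont hinit hode t ht0.le),
    abs_of_pos (by positivity : (0:ℝ) < 4 * (1/2:ℝ) ^ (t:ℝ))]
  exact rho_le_rpow ρ hcont hinit hode t ht0.le

include hcont hinit hode in
lemma rho_exp_integrableOn {s : ℝ} (hs : 0 ≤ s) :
    IntegrableOn (fun t : ℝ => ρ t * Real.exp (-(s*t))) (Ioi 0) := by
  refine Integrable.mono (rho_integrableOn ρ hcont hinit hode)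
    (((hcont.mono Ioi_subset_Ici_self).mul
      ((Real.continuous_exp.comp (continuous_const.mul continuous_id).neg).continuousOn)).aestronglyMeasurable
      measurableSet_Ioi) ?_
  filter_upwards [ae_restrict_mem measurableSet_Ioi] with t ht
  have ht0 : (0:ℝ) < t := ht
  have hρ := rho_pos ρ hcont hinit hode t ht0.le
  have hexp : Real.exp (-(s*t)) ≤ 1 := Real.exp_le_one_iff.mpr (by nlinarith)
  rw [Real.norm_eq_abs, Real.norm_eq_abs, abs_of_pos hρ, abs_mul, abs_of_pos hρ,
    abs_of_pos (Real.exp_pos _)]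
  nlinarith [Real.exp_pos (-(s*t))]

lemma x_exp_le_one {x : ℝ} (hx : 0 ≤ x) : x * Real.exp (-x) ≤ 1 := by
  have h1 : x ≤ Real.exp x := (Real.add_one_le_exp x).trans' (by linarith)
  have h2 : 0 < Real.exp x := Real.exp_pos x
  rw [Real.exp_neg]
  rw [mul_inv_le_iff₀ h2]
  linarith

include hcont hinit hode in
lemma t_rho_exp_integrableOn {s : ℝ} (hs : 0 < s) :
    IntegrableOn (fun t : ℝ => t * ρ t * Real.exp (-(s*t))) (Ioi 0) := by
  have hint : IntegrableOn (fun t : ℝ => (2/s) * Real.exp (-(s/2) * t)) (Ioi 0) :=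
    (exp_neg_integrableOn_Ioi 0 (by linarith)).const_mul _
  refine Integrable.mono hint
    (((continuous_id.continuousOn.mul (hcont.mono Ioi_subset_Ici_self)).mul
      ((Real.continuous_exp.comp (continuous_const.mul continuous_id).neg).continuousOn)).aestronglyMeasurable
      measurableSet_Ioi) ?_
  filter_upwards [ae_restrict_mem measurableSet_Ioi] with t ht
  have ht0 : (0:ℝ) < t := ht
  have hρ := rho_pos ρ hcont hinit hode t ht0.le
  have hρ1 := rho_le_one ρ hcont hinit hode t ht0.le
  have key : t * Real.exp (-(s*t)) ≤ (2/s) * Real.exp (-(s/2) * t) := by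
    have hsplit : Real.exp (-(s*t)) = Real.exp (-(s/2)*t) * Real.exp (-(s/2)*t) := by
      rw [← Real.exp_add]; ring_nf
    have h2 : t * Real.exp (-(s/2)*t) ≤ 2/s := by
      have hxe : ((s/2)*t) * Real.exp (-((s/2)*t)) ≤ 1 := x_exp_le_one (by positivity)
      have heq : Real.exp (-(s/2)*t) = Real.exp (-((s/2)*t)) := by ring_nf
      rw [heq, le_div_iff₀ hs]
      nlinarith [Real.exp_pos (-((s/2)*t))]
    calc t * Real.exp (-(s*t)) = (t * Real.exp (-(s/2)*t)) * Real.exp (-(s/2)*t) := by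
          rw [hsplit]; ring
      _ ≤ (2/s) * Real.exp (-(s/2)*t) := by
          have := Real.exp_pos (-(s/2)*t)
          nlinarith
  rw [Real.norm_eq_abs, Real.norm_eq_abs]
  rw [abs_of_nonneg (by positivity : (0:ℝ) ≤ (2/s) * Real.exp (-(s/2)*t)),
    abs_of_nonneg (by positivity : (0:ℝ) ≤ t * ρ t * Real.exp (-(s*t)))]
  calc t * ρ t * Real.exp (-(s*t)) ≤ t * 1 * Real.exp (-(s*t)) :=
        mul_le_mul_of_nonneg_right (mul_le_mul_of_nonneg_left hρ1 ht0.le) (Real.exp_pos _).le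
    _ = t * Real.exp (-(s*t)) := by ring
    _ ≤ (2/s) * Real.exp (-(s/2) * t) := key

lemma t_exp_le {c t : ℝ} (hc : 0 < c) (ht : 0 ≤ t) :
    t * Real.exp (-(c*t)) ≤ (2/c) * Real.exp (-(c/2*t)) := by
  have hsplit : Real.exp (-(c*t)) = Real.exp (-(c/2*t)) * Real.exp (-(c/2*t)) := by
    rw [← Real.exp_add]; ring_nf
  have hxe : (c/2*t) * Real.exp (-(c/2*t)) ≤ 1 := x_exp_le_one (by positivity)
  have h2 : t * Real.exp (-(c/2*t)) ≤ 2/c := by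
    rw [le_div_iff₀ hc]
    nlinarith [Real.exp_pos (-(c/2*t))]
  calc t * Real.exp (-(c*t)) = (t * Real.exp (-(c/2*t))) * Real.exp (-(c/2*t)) := by
        rw [hsplit]; ring
    _ ≤ (2/c) * Real.exp (-(c/2*t)) :=
        mul_le_mul_of_nonneg_right h2 (Real.exp_pos _).le

lemma exp_integrableOn {c : ℝ} (hc : 0 < c) :
    IntegrableOn (fun t : ℝ => Real.exp (-(c*t))) (Ioi 0) := by
  have := exp_neg_integrableOn_Ioi 0 hc
  simpa [neg_mul] using this

noncomputable def Ffun (ρ : ℝ → ℝ) (s : ℝ) : ℝ := ∫ t in Ioi (0:ℝ), ρ t * Real.exp (-(s*t))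
noncomputable def Gfun (ρ : ℝ → ℝ) (s : ℝ) : ℝ := ∫ t in Ioi (0:ℝ), t * ρ t * Real.exp (-(s*t))

include hcont hinit hode in
lemma F_hasDeriv {s : ℝ} (hs : 0 < s) : HasDerivAt (Ffun ρ) (-(Gfun ρ s)) s := by
  have hmeas : ∀ x : ℝ, AEStronglyMeasurable (fun t => ρ t * Real.exp (-(x*t)))
      (volume.restrict (Ioi 0)) := fun x =>
    ((hcont.mono Ioi_subset_Ici_self).mul
      ((Real.continuous_exp.comp (continuous_const.mul continuous_id).neg).continuousOn)).aestronglyMeasurable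
      measurableSet_Ioi
  have hF'meas : AEStronglyMeasurable (fun t => -(t * ρ t * Real.exp (-(s*t))))
      (volume.restrict (Ioi 0)) :=
    (((continuous_id.continuousOn.mul (hcont.mono Ioi_subset_Ici_self)).mul
      ((Real.continuous_exp.comp (continuous_const.mul continuous_id).neg).continuousOn)).neg).aestronglyMeasurable
      measurableSet_Ioi
  have hbound_int : IntegrableOn (fun t : ℝ => t * Real.exp (-(s/2*t))) (Ioi 0) := by
    have hmaj : IntegrableOn (fun t : ℝ => (2/(s/2)) * Real.exp (-(s/4*t))) (Ioi 0) :=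
      (exp_integrableOn (by linarith : (0:ℝ) < s/4)).const_mul _
    refine hmaj.integrable.mono ?_ ?_
    · exact (continuous_id.mul (Real.continuous_exp.comp
        (continuous_const.mul continuous_id).neg)).aestronglyMeasurable.restrict
    · filter_upwards [ae_restrict_mem measurableSet_Ioi] with t ht
      have ht0 : (0:ℝ) < t := ht
      have hkey := t_exp_le (c := s/2) (t := t) (by linarith) ht0.le
      rw [Real.norm_eq_abs, Real.norm_eq_abs,
        abs_of_nonneg (by positivity : (0:ℝ) ≤ t * Real.exp (-(s/2*t))),
        abs_of_nonneg (by positivity : (0:ℝ) ≤ 2/(s/2) * Real.exp (-(s/4*t)))]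
      calc t * Real.exp (-(s/2*t)) ≤ (2/(s/2)) * Real.exp (-(s/2/2*t)) := hkey
        _ = 2/(s/2) * Real.exp (-(s/4*t)) := by rw [show -(s/2/2*t) = -(s/4*t) from by ring]
  have key := hasDerivAt_integral_of_dominated_loc_of_deriv_le (μ := volume.restrict (Ioi 0))
    (F := fun x t => ρ t * Real.exp (-(x*t)))
    (F' := fun x t => -(t * ρ t * Real.exp (-(x*t))))
    (x₀ := s) (bound := fun t => t * Real.exp (-(s/2*t)))
    (Metric.ball_mem_nhds s (half_pos hs)) (Eventually.of_forall hmeas)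
    (rho_exp_integrableOn ρ hcont hinit hode hs.le) hF'meas ?_ hbound_int ?_
  · have h2 := key.2
    have : (∫ t in Ioi (0:ℝ), -(t * ρ t * Real.exp (-(s*t)))) = -(Gfun ρ s) := by
      rw [integral_neg]; rfl
    rw [this] at h2
    exact h2
  · -- bound on ball
    filter_upwards [ae_restrict_mem measurableSet_Ioi] with t ht
    intro x hx
    have ht0 : (0:ℝ) < t := ht
    have hxhalf : s/2 < x := by
      have hd : |x - s| < s/2 := by
        have := Metric.mem_ball.mp hx
        rwa [Real.dist_eq] at this
      have := abs_lt.mp hd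
      linarith [this.1]
    have hρ := rho_pos ρ hcont hinit hode t ht0.le
    have hρ1 := rho_le_one ρ hcont hinit hode t ht0.le
    have hexp : Real.exp (-(x*t)) ≤ Real.exp (-(s/2*t)) := by
      apply Real.exp_le_exp.mpr
      nlinarith
    rw [Real.norm_eq_abs, abs_neg,
      abs_of_nonneg (by positivity : (0:ℝ) ≤ t * ρ t * Real.exp (-(x*t)))]
    calc t * ρ t * Real.exp (-(x*t)) ≤ t * 1 * Real.exp (-(x*t)) :=
          mul_le_mul_of_nonneg_right (mul_le_mul_of_nonneg_left hρ1 ht0.le) (Real.exp_pos _).le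
      _ = t * Real.exp (-(x*t)) := by ring
      _ ≤ t * Real.exp (-(s/2*t)) := mul_le_mul_of_nonneg_left hexp ht0.le
  · -- differentiability in x
    filter_upwards [ae_restrict_mem measurableSet_Ioi] with t _ht
    intro x _hx
    have hlin : HasDerivAt (fun x : ℝ => -(x*t)) (-t) x := by
      have h := ((hasDerivAt_id x).mul_const t).neg; rw [one_mul] at h; exact h
    have hexp := (Real.hasDerivAt_exp (-(x*t))).comp x hlin
    have := hexp.const_mul (ρ t)
    exact this.congr_deriv (by ring)

lemma exp_cont (c : ℝ) : Continuous (fun u : ℝ => Real.exp (-(c*u))) :=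
  Real.continuous_exp.comp (continuous_const.mul continuous_id).neg

lemma int_exp_Ioc {s : ℝ} (hs : 0 < s) :
    (∫ t in (0:ℝ)..1, Real.exp (-(s*t))) = (1 - Real.exp (-s))/s := by
  have hd : ∀ x ∈ uIcc (0:ℝ) 1, HasDerivAt (fun u => -(1/s) * Real.exp (-(s*u)))
      (Real.exp (-(s*x))) x := by
    intro x _
    have hlin : HasDerivAt (fun u : ℝ => -(s*u)) (-s) x := by
      have h := ((hasDerivAt_id x).const_mul s).neg; rw [mul_one] at h; exact h
    have := ((Real.hasDerivAt_exp (-(s*x))).comp x hlin).const_mul (-(1/s))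
    exact this.congr_deriv (by linear_combination (Real.exp (-(s*x))) * (mul_inv_cancel₀ hs.ne'))
  rw [intervalIntegral.integral_eq_sub_of_hasDerivAt hd ((exp_cont s).intervalIntegrable 0 1)]
  simp only [mul_one, mul_zero, neg_zero, Real.exp_zero]
  field_simp
  ring

lemma int_texp_Ioc {s : ℝ} (hs : 0 < s) :
    (∫ t in (0:ℝ)..1, t * Real.exp (-(s*t))) = 1/s^2 - (1/s + 1/s^2) * Real.exp (-s) := by
  have hd : ∀ x ∈ uIcc (0:ℝ) 1, HasDerivAt (fun u => -((u/s) + 1/s^2) * Real.exp (-(s*u)))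
      (x * Real.exp (-(s*x))) x := by
    intro x _
    have hlin : HasDerivAt (fun u : ℝ => -(s*u)) (-s) x := by
      have h := ((hasDerivAt_id x).const_mul s).neg; rw [mul_one] at h; exact h
    have hexp := (Real.hasDerivAt_exp (-(s*x))).comp x hlin
    have hu : HasDerivAt (fun u : ℝ => -((u/s) + 1/s^2)) (-(1/s)) x :=
      (((hasDerivAt_id x).div_const s).add_const (1/s^2)).neg
    have := hu.mul hexp
    exact this.congr_deriv (by rw [Function.comp_apply]; linear_combination (x * Real.exp (-(s*x)) + Real.exp (-(s*x)) * s⁻¹) * (mul_inv_cancel₀ hs.ne'))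
  rw [intervalIntegral.integral_eq_sub_of_hasDerivAt hd
    ((continuous_id.mul (exp_cont s)).intervalIntegrable 0 1)]
  simp only [mul_one, mul_zero, neg_zero, Real.exp_zero, zero_div]
  field_simp
  ring

include hcont hinit hode in
lemma fe_identity {s T : ℝ} (hs : 0 < s) (hT : 1 ≤ T) :
    (∫ u in (1:ℝ)..T, (-(ρ (u-1) * Real.exp (-(s*u)))
      + (ρ u * Real.exp (-(s*u)) - s * (u * ρ u * Real.exp (-(s*u))))))
    = ρ T * (T * Real.exp (-(s*T))) - Real.exp (-s) := by
  have hIcc : Icc (1:ℝ) T ⊆ Ici 0 := fun x hx => le_trans zero_le_one hx.1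
  have key := intervalIntegral.integral_eq_sub_of_hasDeriv_right_of_le (E := ℝ)
    (f := fun u => ρ u * (u * Real.exp (-(s*u))))
    (f' := fun u => -(ρ (u-1) * Real.exp (-(s*u)))
      + (ρ u * Real.exp (-(s*u)) - s * (u * ρ u * Real.exp (-(s*u))))) hT ?_ ?_ ?_
  · rw [key]
    have h1 : ρ 1 * (1 * Real.exp (-(s*1))) = Real.exp (-s) := by
      rw [hinit 1 ⟨zero_le_one, le_rfl⟩]
      norm_num
    rw [h1]
  · exact (hcont.mono hIcc).mul
      ((continuous_id.mul (exp_cont s)).continuousOn)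
  · intro x hx
    have hx1 : 1 < x := hx.1
    have hx0 : (0:ℝ) < x := lt_trans one_pos hx1
    have hlin : HasDerivAt (fun u : ℝ => -(s*u)) (-s) x := by
      have h := ((hasDerivAt_id x).const_mul s).neg; rw [mul_one] at h; exact h
    have hexp := (Real.hasDerivAt_exp (-(s*x))).comp x hlin
    have h2 : HasDerivAt (fun u : ℝ => u * Real.exp (-(s*u)))
        (1 * Real.exp (-(s*x)) + x * (Real.exp (-(s*x)) * (-s))) x :=
      (hasDerivAt_id x).mul hexp
    have h3 := (hode x hx1).mul h2
    refine (h3.congr_deriv ?_).hasDerivWithinAt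
    field_simp
    ring
  · apply ContinuousOn.intervalIntegrable
    rw [uIcc_of_le hT]
    have hc1 : ContinuousOn (fun u : ℝ => ρ (u-1) * Real.exp (-(s*u))) (Icc 1 T) :=
      (hcont.comp (continuous_id.sub continuous_const).continuousOn
        (fun x hx => by exact sub_nonneg.mpr (le_trans hx.1 le_rfl) |>.trans_eq rfl)).mul
        (exp_cont s).continuousOn
    have hc2 : ContinuousOn (fun u : ℝ => ρ u * Real.exp (-(s*u))) (Icc 1 T) :=
      (hcont.mono hIcc).mul (exp_cont s).continuousOn
    have hc3 : ContinuousOn (fun u : ℝ => u * ρ u * Real.exp (-(s*u))) (Icc 1 T) :=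
      (continuous_id.continuousOn.mul (hcont.mono hIcc)).mul (exp_cont s).continuousOn
    exact (hc1.neg).add (hc2.sub (hc3.const_smul s |>.congr (fun x _ => by simp [smul_eq_mul])))

include hcont hinit hode in
lemma sG_eq {s : ℝ} (hs : 0 < s) :
    s * Gfun ρ s = (1 - Real.exp (-s)) * Ffun ρ s := by
  have hIcc : ∀ T : ℝ, Icc (1:ℝ) T ⊆ Ici 0 := fun T x hx => le_trans zero_le_one hx.1
  have hii1 : ∀ T : ℝ, 1 ≤ T →
      IntervalIntegrable (fun u => ρ (u-1) * Real.exp (-(s*u))) volume 1 T := by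
    intro T hT
    apply ContinuousOn.intervalIntegrable
    rw [uIcc_of_le hT]
    exact (hcont.comp (continuous_id.sub continuous_const).continuousOn
      (fun x hx => by exact sub_nonneg.mpr hx.1)).mul (exp_cont s).continuousOn
  have hii2 : ∀ T : ℝ, 1 ≤ T →
      IntervalIntegrable (fun u => ρ u * Real.exp (-(s*u))) volume 1 T := by
    intro T hT
    apply ContinuousOn.intervalIntegrable
    rw [uIcc_of_le hT]
    exact (hcont.mono (hIcc T)).mul (exp_cont s).continuousOn
  have hii3 : ∀ T : ℝ, 1 ≤ T →
      IntervalIntegrable (fun u => u * ρ u * Real.exp (-(s*u))) volume 1 T := by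
    intro T hT
    apply ContinuousOn.intervalIntegrable
    rw [uIcc_of_le hT]
    exact (continuous_id.continuousOn.mul (hcont.mono (hIcc T))).mul (exp_cont s).continuousOn
  -- identity for each T ≥ 1
  have hIdent : ∀ T : ℝ, 1 ≤ T →
      -(∫ u in (1:ℝ)..T, ρ (u-1) * Real.exp (-(s*u)))
        + ((∫ u in (1:ℝ)..T, ρ u * Real.exp (-(s*u)))
          - s * ∫ u in (1:ℝ)..T, u * ρ u * Real.exp (-(s*u)))
      = ρ T * (T * Real.exp (-(s*T))) - Real.exp (-s) := by
    intro T hT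
    have hfe := fe_identity ρ hcont hinit hode hs hT
    have e1 := intervalIntegral.integral_add (μ := volume) (a := 1) (b := T)
      (f := fun u => -(ρ (u-1) * Real.exp (-(s*u))))
      (g := fun u => ρ u * Real.exp (-(s*u)) - s * (u * ρ u * Real.exp (-(s*u))))
      ((hii1 T hT).neg) (((hii2 T hT).sub ((hii3 T hT).const_mul s)))
    have e2 := intervalIntegral.integral_neg (μ := volume) (a := 1) (b := T)
      (f := fun u => ρ (u-1) * Real.exp (-(s*u)))
    have e3 := intervalIntegral.integral_sub (hii2 T hT) ((hii3 T hT).const_mul s)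
    have e4 := intervalIntegral.integral_const_mul (μ := volume) (a := 1) (b := T)
      (r := s) (f := fun u => u * ρ u * Real.exp (-(s*u)))
    rw [e1, e2, e3, e4] at hfe
    exact hfe
  -- change of variables
  have hshift : ∀ T : ℝ, 1 ≤ T →
      (∫ u in (1:ℝ)..T, ρ (u-1) * Real.exp (-(s*u)))
        = (∫ v in (0:ℝ)..(T-1), ρ v * Real.exp (-(s*v))) * Real.exp (-s) := by
    intro T hT
    have hcongr : ∀ u : ℝ, ρ (u-1) * Real.exp (-(s*u))
        = (fun v => ρ v * Real.exp (-(s*v)) * Real.exp (-s)) (u - 1) := by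
      intro u
      simp only
      rw [mul_assoc, ← Real.exp_add]
      congr 2
      ring
    rw [intervalIntegral.integral_congr (fun u _ => hcongr u),
      intervalIntegral.integral_comp_sub_right
        (fun v => ρ v * Real.exp (-(s*v)) * Real.exp (-s)) 1]
    rw [show (1:ℝ)-1 = 0 by norm_num, intervalIntegral.integral_mul_const]
  -- limits
  have hFint := rho_exp_integrableOn ρ hcont hinit hode hs.le
  have hGint := t_rho_exp_integrableOn ρ hcont hinit hode hs
  have tA : Tendsto (fun T : ℝ => ∫ v in (0:ℝ)..(T-1), ρ v * Real.exp (-(s*v))) atTop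
      (nhds (Ffun ρ s)) :=
    intervalIntegral_tendsto_integral_Ioi 0 hFint
      (tendsto_atTop_add_const_right atTop (-1) tendsto_id)
  have tB : Tendsto (fun T : ℝ => ∫ u in (1:ℝ)..T, ρ u * Real.exp (-(s*u))) atTop
      (nhds (∫ u in Ioi (1:ℝ), ρ u * Real.exp (-(s*u)))) :=
    intervalIntegral_tendsto_integral_Ioi 1 (hFint.mono_set (Ioi_subset_Ioi zero_le_one))
      tendsto_id
  have tC : Tendsto (fun T : ℝ => ∫ u in (1:ℝ)..T, u * ρ u * Real.exp (-(s*u))) atTop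
      (nhds (∫ u in Ioi (1:ℝ), u * ρ u * Real.exp (-(s*u)))) :=
    intervalIntegral_tendsto_integral_Ioi 1 (hGint.mono_set (Ioi_subset_Ioi zero_le_one))
      tendsto_id
  have tD : Tendsto (fun T : ℝ => ρ T * (T * Real.exp (-(s*T)))) atTop (nhds 0) := by
    have base : Tendsto (fun x : ℝ => x * Real.exp (-x)) atTop (nhds 0) := by
      simpa using tendsto_pow_mul_exp_neg_atTop_nhds_zero 1
    have hsT : Tendsto (fun T : ℝ => s * T) atTop atTop :=
      Tendsto.const_mul_atTop hs tendsto_id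
    have comp := base.comp hsT
    have hmul := comp.const_mul (1/s)
    have heq : (fun T : ℝ => (1/s) * (((s*T)) * Real.exp (-(s*T)))) =
        fun T : ℝ => T * Real.exp (-(s*T)) := by
      funext T; field_simp
    rw [show ((1:ℝ)/s) * 0 = 0 by ring] at hmul
    have hTe : Tendsto (fun T : ℝ => T * Real.exp (-(s*T))) atTop (nhds 0) := by
      rw [← heq]; exact hmul
    apply squeeze_zero' (g := fun T : ℝ => T * Real.exp (-(s*T)))
    · filter_upwards [eventually_ge_atTop (1:ℝ)] with T hT
      have := rho_pos ρ hcont hinit hode T (by linarith)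
      positivity
    · filter_upwards [eventually_ge_atTop (1:ℝ)] with T hT
      have h1 := rho_le_one ρ hcont hinit hode T (by linarith)
      have h2 : (0:ℝ) ≤ T * Real.exp (-(s*T)) := by positivity
      nlinarith
    · exact hTe
  -- pass to the limit in the identity
  have tLHS : Tendsto (fun T : ℝ =>
      -((∫ v in (0:ℝ)..(T-1), ρ v * Real.exp (-(s*v))) * Real.exp (-s))
        + ((∫ u in (1:ℝ)..T, ρ u * Real.exp (-(s*u)))
          - s * ∫ u in (1:ℝ)..T, u * ρ u * Real.exp (-(s*u)))) atTop
      (nhds (-(Ffun ρ s * Real.exp (-s))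
        + ((∫ u in Ioi (1:ℝ), ρ u * Real.exp (-(s*u)))
          - s * ∫ u in Ioi (1:ℝ), u * ρ u * Real.exp (-(s*u))))) :=
    ((tA.mul_const _).neg).add (tB.sub (tC.const_mul s))
  have tRHS : Tendsto (fun T : ℝ => ρ T * (T * Real.exp (-(s*T))) - Real.exp (-s)) atTop
      (nhds (0 - Real.exp (-s))) := tD.sub_const _
  have hstar : -(Ffun ρ s * Real.exp (-s))
      + ((∫ u in Ioi (1:ℝ), ρ u * Real.exp (-(s*u)))
        - s * ∫ u in Ioi (1:ℝ), u * ρ u * Real.exp (-(s*u)))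
      = 0 - Real.exp (-s) := by
    refine tendsto_nhds_unique (tLHS.congr' ?_) tRHS
    filter_upwards [eventually_ge_atTop (1:ℝ)] with T hT
    rw [← hshift T hT]
    exact hIdent T hT
  -- split the Ioi 0 integrals
  have hunion : Ioc (0:ℝ) 1 ∪ Ioi 1 = Ioi 0 := Ioc_union_Ioi_eq_Ioi zero_le_one
  have hsplitF : Ffun ρ s = (∫ t in Ioc (0:ℝ) 1, ρ t * Real.exp (-(s*t)))
      + ∫ t in Ioi (1:ℝ), ρ t * Real.exp (-(s*t)) := by
    rw [Ffun, ← hunion, setIntegral_union (Ioc_disjoint_Ioi le_rfl) measurableSet_Ioi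
      (hFint.mono_set (by rw [← hunion]; exact subset_union_left))
      (hFint.mono_set (by rw [← hunion]; exact subset_union_right))]
  have hsplitG : Gfun ρ s = (∫ t in Ioc (0:ℝ) 1, t * ρ t * Real.exp (-(s*t)))
      + ∫ t in Ioi (1:ℝ), t * ρ t * Real.exp (-(s*t)) := by
    rw [Gfun, ← hunion, setIntegral_union (Ioc_disjoint_Ioi le_rfl) measurableSet_Ioi
      (hGint.mono_set (by rw [← hunion]; exact subset_union_left))
      (hGint.mono_set (by rw [← hunion]; exact subset_union_right))]
  -- explicit values on (0,1]
  have hvalF : (∫ t in Ioc (0:ℝ) 1, ρ t * Real.exp (-(s*t))) = (1 - Real.exp (-s))/s := by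
    rw [setIntegral_congr_fun measurableSet_Ioc
      (fun t ht => by rw [hinit t ⟨ht.1.le, ht.2⟩, one_mul] : EqOn _ (fun t => Real.exp (-(s*t))) _)]
    rw [← intervalIntegral.integral_of_le zero_le_one]
    exact int_exp_Ioc hs
  have hvalG : (∫ t in Ioc (0:ℝ) 1, t * ρ t * Real.exp (-(s*t)))
      = 1/s^2 - (1/s + 1/s^2) * Real.exp (-s) := by
    rw [setIntegral_congr_fun measurableSet_Ioc
      (fun t ht => by rw [hinit t ⟨ht.1.le, ht.2⟩, mul_one] : EqOn _ (fun t => t * Real.exp (-(s*t))) _)]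
    rw [← intervalIntegral.integral_of_le zero_le_one]
    exact int_texp_Ioc hs
  -- final algebra
  have hE1 : (∫ u in Ioi (1:ℝ), ρ u * Real.exp (-(s*u)))
      = Ffun ρ s - (1 - Real.exp (-s))/s := by rw [hsplitF, hvalF]; ring
  have hE2 : (∫ u in Ioi (1:ℝ), u * ρ u * Real.exp (-(s*u)))
      = Gfun ρ s - (1/s^2 - (1/s + 1/s^2) * Real.exp (-s)) := by rw [hsplitG, hvalG]; ring
  rw [hE1, hE2] at hstar
  have hs0 : s ≠ 0 := ne_of_gt hs
  have hAJ : s * (1/s^2 - (1/s + 1/s^2) * Real.exp (-s))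
      = (1 - Real.exp (-s))/s - Real.exp (-s) := by
    field_simp
    ring
  linear_combination (-1 : ℝ) * hstar + hAJ

noncomputable def Phi (ρ : ℝ → ℝ) (s : ℝ) : ℝ :=
  Ffun ρ s * Real.exp (∫ t in (1:ℝ)..s, hfun t)

include hcont hinit hode in
lemma Phi_hasDeriv {s : ℝ} (hs : 0 < s) : HasDerivAt (Phi ρ) 0 s := by
  have hE : HasDerivAt (fun s : ℝ => ∫ t in (1:ℝ)..s, hfun t) (hfun s) s :=
    intervalIntegral.integral_hasDerivAt_right (hfun_intervalIntegrable zero_le_one hs.le)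
      ⟨Ioi 0, Ioi_mem_nhds hs, hfun_continuousOn.aestronglyMeasurable measurableSet_Ioi⟩
      (hfun_continuousOn.continuousAt (Ioi_mem_nhds hs))
  have hexp : HasDerivAt (fun x : ℝ => Real.exp (∫ t in (1:ℝ)..x, hfun t))
      (Real.exp (∫ t in (1:ℝ)..s, hfun t) * hfun s) s := (Real.hasDerivAt_exp _).comp s hE
  have hF := F_hasDeriv ρ hcont hinit hode hs
  have hprod := hF.mul hexp
  have hode' := sG_eq ρ hcont hinit hode hs
  set X := Real.exp (∫ t in (1:ℝ)..s, hfun t) with hX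
  have hs0 : s ≠ 0 := ne_of_gt hs
  have hzero : -Gfun ρ s * X + Ffun ρ s * (X * hfun s) = 0 := by
    rw [hfun]
    have hG : Gfun ρ s = (1 - Real.exp (-s)) * Ffun ρ s / s := by
      field_simp at hode' ⊢
      linarith [hode']
    rw [hG]
    field_simp
    ring
  show HasDerivAt (Phi ρ) 0 s
  exact hprod.congr_deriv hzero

include hcont hinit hode in
lemma Phi_const {a b : ℝ} (ha : 0 < a) (hab : a ≤ b) : Phi ρ a = Phi ρ b := by
  have := constant_of_has_deriv_right_zero (f := Phi ρ) (a := a) (b := b)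
    (fun x hx => ((Phi_hasDeriv ρ hcont hinit hode
      (lt_of_lt_of_le ha hx.1)).continuousAt).continuousWithinAt)
    (fun x hx => (Phi_hasDeriv ρ hcont hinit hode
      (lt_of_lt_of_le ha hx.1)).hasDerivWithinAt)
    b ⟨hab, le_rfl⟩
  exact this.symm

include hcont hinit hode in
lemma F_tendsto_right :
    Tendsto (Ffun ρ) (nhdsWithin 0 (Ioi 0)) (nhds (∫ t in Ioi (0:ℝ), ρ t)) := by
  have := tendsto_integral_filter_of_dominated_convergence
    (μ := volume.restrict (Ioi 0)) (l := nhdsWithin (0:ℝ) (Ioi 0))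
    (F := fun s t => ρ t * Real.exp (-(s*t))) (f := ρ)
    (bound := fun t : ℝ => 4 * (1/2:ℝ) ^ (t:ℝ)) ?_ ?_ ?_ ?_
  · exact this
  · refine Eventually.of_forall fun x => ?_
    exact ((hcont.mono Ioi_subset_Ici_self).mul
      ((Real.continuous_exp.comp (continuous_const.mul continuous_id).neg).continuousOn)).aestronglyMeasurable
      measurableSet_Ioi
  · filter_upwards [self_mem_nhdsWithin] with x hx
    filter_upwards [ae_restrict_mem measurableSet_Ioi] with t ht
    have ht0 : (0:ℝ) < t := ht
    have hx0 : (0:ℝ) < x := hx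
    have hρ := rho_pos ρ hcont hinit hode t ht0.le
    have hb := rho_le_rpow ρ hcont hinit hode t ht0.le
    have hexp : Real.exp (-(x*t)) ≤ 1 := Real.exp_le_one_iff.mpr (by nlinarith)
    rw [Real.norm_eq_abs, abs_of_nonneg (by positivity : (0:ℝ) ≤ ρ t * Real.exp (-(x*t)))]
    nlinarith [Real.exp_pos (-(x*t))]
  · exact majorant_integrable
  · filter_upwards [ae_restrict_mem measurableSet_Ioi] with t _ht
    have hc : Continuous (fun s : ℝ => ρ t * Real.exp (-(s*t))) :=
      continuous_const.mul (Real.continuous_exp.comp (continuous_id.mul continuous_const).neg)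
    have := (hc.tendsto 0).mono_left (nhdsWithin_le_nhds (s := Ioi 0))
    simpa using this

lemma E_tendsto_right :
    Tendsto (fun s : ℝ => ∫ t in (1:ℝ)..s, hfun t) (nhdsWithin 0 (Ioi 0))
      (nhds (∫ t in (1:ℝ)..0, hfun t)) := by
  have hsmall : Tendsto (fun s : ℝ => ∫ t in (0:ℝ)..s, hfun t) (nhdsWithin 0 (Ioi 0))
      (nhds 0) := by
    have hb : ∀ᶠ s in nhdsWithin (0:ℝ) (Ioi 0), ‖∫ t in (0:ℝ)..s, hfun t‖ ≤ |s| := by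
      filter_upwards [self_mem_nhdsWithin] with s hs
      have hs0 : (0:ℝ) < s := hs
      have hbd : ∀ x ∈ Set.uIoc (0:ℝ) s, ‖hfun x‖ ≤ 1 := by
        intro x hx
        rw [uIoc_of_le hs0.le] at hx
        rw [Real.norm_eq_abs, abs_of_nonneg (hfun_nonneg hx.1.le)]
        exact hfun_le_one hx.1.le
      have := intervalIntegral.norm_integral_le_of_norm_le_const (C := 1)
        (f := hfun) (a := 0) (b := s) hbd
      simpa using this
    refine squeeze_zero_norm' hb ?_
    have := (continuous_abs.tendsto (0:ℝ)).mono_left (nhdsWithin_le_nhds (s := Ioi 0))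
    simpa using this
  have hoadd : ∀ᶠ s in nhdsWithin (0:ℝ) (Ioi 0),
      (∫ t in (1:ℝ)..0, hfun t) + (∫ t in (0:ℝ)..s, hfun t) = ∫ t in (1:ℝ)..s, hfun t := by
    filter_upwards [self_mem_nhdsWithin] with s hs
    exact intervalIntegral.integral_add_adjacent_intervals
      (hfun_intervalIntegrable zero_le_one le_rfl)
      (hfun_intervalIntegrable le_rfl (le_of_lt hs))
  have := (tendsto_const_nhds (x := ∫ t in (1:ℝ)..0, hfun t)).add hsmall
  rw [add_zero] at this
  exact this.congr' hoadd

include hcont hinit hode in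
lemma sF_tendsto_one : Tendsto (fun s : ℝ => s * Ffun ρ s) atTop (nhds 1) := by
  have hexpint : IntegrableOn (fun t : ℝ => Real.exp (-t)) (Ioi 1) := by
    have := exp_neg_integrableOn_Ioi (a := 1) (b := 1) one_pos
    simpa using this
  have hval : (∫ t in Ioi (1:ℝ), Real.exp (-t)) = Real.exp (-1) := integral_exp_neg_Ioi 1
  have hkey : ∀ s : ℝ, 1 ≤ s →
      s * Ffun ρ s = (1 - Real.exp (-s)) + s * ∫ t in Ioi (1:ℝ), ρ t * Real.exp (-(s*t)) := by
    intro s hs1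
    have hs : (0:ℝ) < s := lt_of_lt_of_le one_pos hs1
    have hFint := rho_exp_integrableOn ρ hcont hinit hode hs.le
    have hunion : Ioc (0:ℝ) 1 ∪ Ioi 1 = Ioi 0 := Ioc_union_Ioi_eq_Ioi zero_le_one
    have hsplitF : Ffun ρ s = (∫ t in Ioc (0:ℝ) 1, ρ t * Real.exp (-(s*t)))
        + ∫ t in Ioi (1:ℝ), ρ t * Real.exp (-(s*t)) := by
      rw [Ffun, ← hunion, setIntegral_union (Ioc_disjoint_Ioi le_rfl) measurableSet_Ioi
        (hFint.mono_set (by rw [← hunion]; exact subset_union_left))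
        (hFint.mono_set (by rw [← hunion]; exact subset_union_right))]
    have hvalF : (∫ t in Ioc (0:ℝ) 1, ρ t * Real.exp (-(s*t))) = (1 - Real.exp (-s))/s := by
      rw [setIntegral_congr_fun measurableSet_Ioc
        (fun t ht => by rw [hinit t ⟨ht.1.le, ht.2⟩, one_mul] :
          EqOn _ (fun t => Real.exp (-(s*t))) _)]
      rw [← intervalIntegral.integral_of_le zero_le_one]
      exact int_exp_Ioc hs
    rw [hsplitF, hvalF]
    field_simp
  have hR : ∀ s : ℝ, 1 ≤ s →
      (∫ t in Ioi (1:ℝ), ρ t * Real.exp (-(s*t))) ≤ Real.exp (-(s-1)) * Real.exp (-1) := by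
    intro s hs1
    have hs : (0:ℝ) < s := lt_of_lt_of_le one_pos hs1
    have hFint := rho_exp_integrableOn ρ hcont hinit hode hs.le
    have hle : ∀ t ∈ Ioi (1:ℝ), ρ t * Real.exp (-(s*t)) ≤ Real.exp (-(s-1)) * Real.exp (-t) := by
      intro t ht
      have ht1 : (1:ℝ) < t := ht
      have hρ1 := rho_le_one ρ hcont hinit hode t (by linarith)
      have hρ0 := (rho_pos ρ hcont hinit hode t (by linarith)).le
      have hsp : Real.exp (-(s*t)) ≤ Real.exp (-(s-1)) * Real.exp (-t) := by
        rw [← Real.exp_add]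
        apply Real.exp_le_exp.mpr
        nlinarith
      calc ρ t * Real.exp (-(s*t)) ≤ 1 * Real.exp (-(s*t)) :=
            mul_le_mul_of_nonneg_right hρ1 (Real.exp_pos _).le
        _ = Real.exp (-(s*t)) := one_mul _
        _ ≤ Real.exp (-(s-1)) * Real.exp (-t) := hsp
    have := setIntegral_mono_on (hFint.mono_set (Ioi_subset_Ioi zero_le_one))
      (hexpint.const_mul _) measurableSet_Ioi hle
    calc (∫ t in Ioi (1:ℝ), ρ t * Real.exp (-(s*t)))
        ≤ ∫ t in Ioi (1:ℝ), Real.exp (-(s-1)) * Real.exp (-t) := this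
      _ = Real.exp (-(s-1)) * Real.exp (-1) := by rw [integral_const_mul, hval]
  have hRpos : ∀ s : ℝ, 1 ≤ s → 0 ≤ ∫ t in Ioi (1:ℝ), ρ t * Real.exp (-(s*t)) := by
    intro s hs1
    refine setIntegral_nonneg measurableSet_Ioi fun t ht => ?_
    have ht1 : (1:ℝ) < t := ht
    exact mul_nonneg (rho_pos ρ hcont hinit hode t (by linarith)).le (Real.exp_pos _).le
  -- squeeze
  have hlow : Tendsto (fun s : ℝ => 1 - Real.exp (-s)) atTop (nhds 1) := by
    have : Tendsto (fun s : ℝ => Real.exp (-s)) atTop (nhds 0) := Real.tendsto_exp_neg_atTop_nhds_zero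
    have h2 := (tendsto_const_nhds (x := (1:ℝ))).sub this
    simpa using h2
  have hup : Tendsto (fun s : ℝ => (1 - Real.exp (-s)) + s * (Real.exp (-(s-1)) * Real.exp (-1)))
      atTop (nhds 1) := by
    have hterm : Tendsto (fun s : ℝ => s * (Real.exp (-(s-1)) * Real.exp (-1))) atTop (nhds 0) := by
      have heq : (fun s : ℝ => s * (Real.exp (-(s-1)) * Real.exp (-1)))
          = fun s : ℝ => s * Real.exp (-s) := by
        funext s
        rw [← Real.exp_add]
        congr 2
        ring
      rw [heq]
      simpa using tendsto_pow_mul_exp_neg_atTop_nhds_zero 1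
    have := hlow.add hterm
    simpa using this
  refine tendsto_of_tendsto_of_tendsto_of_le_of_le' hlow hup ?_ ?_
  · filter_upwards [eventually_ge_atTop (1:ℝ)] with s hs1
    rw [hkey s hs1]
    have hs : (0:ℝ) < s := lt_of_lt_of_le one_pos hs1
    nlinarith [hRpos s hs1]
  · filter_upwards [eventually_ge_atTop (1:ℝ)] with s hs1
    rw [hkey s hs1]
    have hs : (0:ℝ) < s := lt_of_lt_of_le one_pos hs1
    nlinarith [hR s hs1]

include hcont hinit hode in
lemma Phi_tendsto_atTop :
    Tendsto (Phi ρ) atTop (nhds (Real.exp (Real.eulerMascheroniConstant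
      - ∫ t in (0:ℝ)..1, hfun t))) := by
  set a := ∫ t in (0:ℝ)..1, hfun t with ha
  have h1 : Tendsto (fun s : ℝ => (∫ t in (0:ℝ)..s, hfun t) - Real.log s - a) atTop
      (nhds (Real.eulerMascheroniConstant - a)) :=
    (tendsto_hfun_integral_sub_log).sub_const a
  have h2 : Tendsto (fun s : ℝ => Real.exp ((∫ t in (0:ℝ)..s, hfun t) - Real.log s - a)) atTop
      (nhds (Real.exp (Real.eulerMascheroniConstant - a))) :=
    (Real.continuous_exp.tendsto _).comp h1
  have h3 := (sF_tendsto_one ρ hcont hinit hode).mul h2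
  rw [one_mul] at h3
  refine h3.congr' ?_
  filter_upwards [eventually_ge_atTop (1:ℝ)] with s hs1
  have hs : (0:ℝ) < s := lt_of_lt_of_le one_pos hs1
  have hadj : a + (∫ t in (1:ℝ)..s, hfun t) = ∫ t in (0:ℝ)..s, hfun t :=
    intervalIntegral.integral_add_adjacent_intervals
      (hfun_intervalIntegrable le_rfl zero_le_one)
      (hfun_intervalIntegrable zero_le_one hs.le)
  rw [Phi]
  rw [show (∫ t in (0:ℝ)..s, hfun t) - Real.log s - a
      = (∫ t in (1:ℝ)..s, hfun t) - Real.log s by rw [← hadj]; ring]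
  rw [Real.exp_sub, Real.exp_log hs]
  field_simp

include hcont hinit hode in
lemma rho_integral_value : (∫ t in Ioi (0:ℝ), ρ t) = Real.exp Real.eulerMascheroniConstant := by
  set a := ∫ t in (0:ℝ)..1, hfun t with ha
  set C := Phi ρ 1 with hC
  have hconst : ∀ s : ℝ, 0 < s → Phi ρ s = C := by
    intro s hs
    rcases le_or_gt s 1 with h | h
    · exact Phi_const ρ hcont hinit hode hs h
    · exact (Phi_const ρ hcont hinit hode one_pos h.le).symm
  -- limit from the right at 0
  have hlim0 : Tendsto (Phi ρ) (nhdsWithin 0 (Ioi 0))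
      (nhds ((∫ t in Ioi (0:ℝ), ρ t) * Real.exp (∫ t in (1:ℝ)..0, hfun t))) :=
    (F_tendsto_right ρ hcont hinit hode).mul
      ((Real.continuous_exp.tendsto _).comp E_tendsto_right)
  have hconst0 : Tendsto (Phi ρ) (nhdsWithin 0 (Ioi 0)) (nhds C) := by
    refine tendsto_const_nhds.congr' ?_
    filter_upwards [self_mem_nhdsWithin] with s hs
    exact (hconst s hs).symm
  have hCval : C = (∫ t in Ioi (0:ℝ), ρ t) * Real.exp (∫ t in (1:ℝ)..0, hfun t) :=
    tendsto_nhds_unique hconst0 hlim0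
  -- limit at infinity
  have hconstT : Tendsto (Phi ρ) atTop (nhds C) := by
    refine tendsto_const_nhds.congr' ?_
    filter_upwards [eventually_ge_atTop (1:ℝ)] with s hs
    exact (hconst s (lt_of_lt_of_le one_pos hs)).symm
  have hCval2 : C = Real.exp (Real.eulerMascheroniConstant - a) :=
    tendsto_nhds_unique hconstT (Phi_tendsto_atTop ρ hcont hinit hode)
  have hsymm : (∫ t in (1:ℝ)..0, hfun t) = -a := by
    rw [ha, ← intervalIntegral.integral_symm]
  rw [hsymm] at hCval
  have := hCval.symm.trans hCval2
  have hexp_ne : Real.exp (-a) ≠ 0 := Real.exp_ne_zero _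
  have : (∫ t in Ioi (0:ℝ), ρ t) = Real.exp (Real.eulerMascheroniConstant - a) / Real.exp (-a) := by
    field_simp at this ⊢
    linarith [this]
  rw [this, ← Real.exp_sub]
  congr 1
  ring

end Rho

/-- With `P(u) = e^{−γ} ∫₀^u ρ(t) dt` for the Dickman–de Bruijn function `ρ`,
`lim_{u→∞} P(u) = 1`, i.e. `∫₀^∞ ρ(t) dt = e^γ`. -/
theorem dickman_integral_tendsto_one (ρ : ℝ → ℝ)
    (hcont : ContinuousOn ρ (Set.Ici 0))
    (hinit : ∀ t ∈ Set.Icc (0 : ℝ) 1, ρ t = 1)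
    (hode : ∀ u : ℝ, 1 < u → HasDerivAt ρ (-ρ (u - 1) / u) u) :
    Tendsto (fun u : ℝ =>
        Real.exp (-Real.eulerMascheroniConstant) * ∫ t in (0 : ℝ)..u, ρ t)
      atTop (nhds 1) := by
  have hI := rho_integral_value ρ hcont hinit hode
  have h1 : Tendsto (fun u : ℝ => ∫ t in (0:ℝ)..u, ρ t) atTop
      (nhds (∫ t in Set.Ioi (0:ℝ), ρ t)) :=
    MeasureTheory.intervalIntegral_tendsto_integral_Ioi 0
      (rho_integrableOn ρ hcont hinit hode) tendsto_id
  rw [hI] at h1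
  have h2 := h1.const_mul (Real.exp (-Real.eulerMascheroniConstant))
  have h3 : Real.exp (-Real.eulerMascheroniConstant) * Real.exp Real.eulerMascheroniConstant
      = 1 := by
    rw [← Real.exp_add]
    simp
  rwa [h3] at h2
end

section
/- Let χ be a real Dirichlet character and y ≥ 2, and let S(y) be the set of y-friable positive integers. Then Σ_{n ∈ S(y)} |1 − χ(n)|/n ≤ ( Σ_{p ≤ y, j ≥ 1} |1 − χ(p^j)|/p^j ) · Σ_{m ∈ S(y)} 1/m, where both friable sums converge. -/
private lemma chi_abs_le_one (χ : ℕ → ℝ) (hval : ∀ n : ℕ, χ n = -1 ∨ χ n = 0 ∨ χ n = 1)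
    (n : ℕ) : |χ n| ≤ 1 := by
  rcases hval n with h | h | h <;> rw [h] <;> norm_num

private lemma abs_one_sub_chi_le_two (χ : ℕ → ℝ) (hval : ∀ n : ℕ, χ n = -1 ∨ χ n = 0 ∨ χ n = 1)
    (n : ℕ) : |1 - χ n| ≤ 2 := by
  have := chi_abs_le_one χ hval n
  rw [abs_le] at this ⊢
  constructor <;> linarith [this.1, this.2]

private lemma key_bound (χ : ℕ → ℝ) (h1 : χ 1 = 1)
    (hmul : ∀ m n : ℕ, χ (m * n) = χ m * χ n)
    (hval : ∀ n : ℕ, χ n = -1 ∨ χ n = 0 ∨ χ n = 1) :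
    ∀ n : ℕ, n ≠ 0 → |1 - χ n| ≤ ∑ p ∈ n.primeFactors, |1 - χ (p ^ n.factorization p)| := by
  intro n
  induction n using Nat.recOnPrimePow with
  | zero => intro h; simp at h
  | one => intro _; simp [h1]
  | prime_pow_mul a p k hp hpa hk ih =>
    intro hne
    have ha : a ≠ 0 := by rintro rfl; simp at hne
    have hpk : (p ^ k : ℕ) ≠ 0 := pow_ne_zero _ hp.pos.ne'
    have hpnot : p ∉ a.primeFactors := fun h => hpa (Nat.dvd_of_mem_primeFactors h)
    have hfac : (p ^ k * a).primeFactors = insert p a.primeFactors := by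
      rw [Nat.primeFactors_mul hpk ha, Nat.primeFactors_pow _ hk.ne', hp.primeFactors]
      rfl
    have h1' : (p ^ k * a).factorization p = k := by
      rw [Nat.factorization_mul hpk ha]
      simp [hp.factorization_pow, Nat.factorization_eq_zero_of_not_dvd hpa]
    have h2' : ∀ q ∈ a.primeFactors, (p ^ k * a).factorization q = a.factorization q := by
      intro q hq
      have hqp : q ≠ p := fun h => hpnot (h ▸ hq)
      rw [Nat.factorization_mul hpk ha]
      simp [hp.factorization_pow, Finsupp.single_apply, hqp.symm]
    rw [hfac, Finset.sum_insert hpnot, h1']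
    calc |1 - χ (p ^ k * a)| = |(1 - χ (p ^ k)) + χ (p ^ k) * (1 - χ a)| := by
          rw [hmul]; ring_nf
      _ ≤ |1 - χ (p ^ k)| + |χ (p ^ k)| * |1 - χ a| := by
          refine (abs_add_le _ _).trans ?_; rw [abs_mul]
      _ ≤ |1 - χ (p ^ k)| + |1 - χ a| := by
          have h3 := chi_abs_le_one χ hval (p ^ k)
          have h4 : (0:ℝ) ≤ |1 - χ a| := abs_nonneg _
          nlinarith
      _ ≤ |1 - χ (p ^ k)| + ∑ q ∈ a.primeFactors, |1 - χ (q ^ (p ^ k * a).factorization q)| := by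
          rw [Finset.sum_congr rfl fun q hq => by rw [h2' q hq]]
          exact add_le_add_right (ih ha) _

private lemma inner_bound (χ : ℕ → ℝ) (y : ℝ) (p : ℕ) (hp : p.Prime)
    (ha : Summable (fun j : ℕ => |1 - χ (p ^ (j + 1))| / (p : ℝ) ^ (j + 1)))
    (hb : Summable (fun m : {m : ℕ // 0 < m ∧ ∀ p : ℕ, p.Prime → p ∣ m → (p : ℝ) ≤ y} =>
      (1 : ℝ) / ((m : ℕ) : ℝ)))
    (F' : Finset {n : ℕ // 0 < n ∧ ∀ p : ℕ, p.Prime → p ∣ n → (p : ℝ) ≤ y})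
    (hF' : ∀ n ∈ F', p ∈ (n : ℕ).primeFactors) :
    ∑ n ∈ F', |1 - χ (p ^ ((n : ℕ).factorization p))| / ((n : ℕ) : ℝ)
      ≤ (∑' j : ℕ, |1 - χ (p ^ (j + 1))| / (p : ℝ) ^ (j + 1))
        * ∑' m : {m : ℕ // 0 < m ∧ ∀ p : ℕ, p.Prime → p ∣ m → (p : ℝ) ≤ y},
            (1 : ℝ) / ((m : ℕ) : ℝ) := by
  have haN : Summable (fun j : ℕ => ‖|1 - χ (p ^ (j + 1))| / (p : ℝ) ^ (j + 1)‖) :=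
    ha.congr fun j => (Real.norm_of_nonneg (by positivity)).symm
  have hbN : Summable (fun m : {m : ℕ // 0 < m ∧ ∀ p : ℕ, p.Prime → p ∣ m → (p : ℝ) ≤ y} =>
      ‖(1 : ℝ) / ((m : ℕ) : ℝ)‖) :=
    hb.congr fun m => (Real.norm_of_nonneg (by positivity)).symm
  have hHsum : Summable (fun z : ℕ ×
      {m : ℕ // 0 < m ∧ ∀ p : ℕ, p.Prime → p ∣ m → (p : ℝ) ≤ y} =>
      (|1 - χ (p ^ (z.1 + 1))| / (p : ℝ) ^ (z.1 + 1)) * ((1 : ℝ) / ((z.2 : ℕ) : ℝ))) :=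
    summable_mul_of_summable_norm
      (f := fun j : ℕ => |1 - χ (p ^ (j + 1))| / (p : ℝ) ^ (j + 1))
      (g := fun m : {m : ℕ // 0 < m ∧ ∀ p : ℕ, p.Prime → p ∣ m → (p : ℝ) ≤ y} =>
        (1 : ℝ) / ((m : ℕ) : ℝ)) haN hbN
  have htsum := tsum_mul_tsum_of_summable_norm
      (f := fun j : ℕ => |1 - χ (p ^ (j + 1))| / (p : ℝ) ^ (j + 1))
      (g := fun m : {m : ℕ // 0 < m ∧ ∀ p : ℕ, p.Prime → p ∣ m → (p : ℝ) ≤ y} =>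
        (1 : ℝ) / ((m : ℕ) : ℝ)) haN hbN
  set ι : {n : ℕ // 0 < n ∧ ∀ p : ℕ, p.Prime → p ∣ n → (p : ℝ) ≤ y} →
      ℕ × {m : ℕ // 0 < m ∧ ∀ p : ℕ, p.Prime → p ∣ m → (p : ℝ) ≤ y} :=
    fun n => ((n : ℕ).factorization p - 1,
      ⟨ordCompl[p] (n : ℕ), ⟨Nat.ordCompl_pos p n.2.1.ne',
        fun q hq hd => n.2.2 q hq (hd.trans (Nat.ordCompl_dvd (n : ℕ) p))⟩⟩) with hι
  have hpoint : ∀ n ∈ F', |1 - χ (p ^ ((n : ℕ).factorization p))| / ((n : ℕ) : ℝ)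
      = (|1 - χ (p ^ ((ι n).1 + 1))| / (p : ℝ) ^ ((ι n).1 + 1))
        * ((1 : ℝ) / (((ι n).2 : ℕ) : ℝ)) := by
    intro n hn
    have hn0 : (n : ℕ) ≠ 0 := n.2.1.ne'
    have hv : 0 < (n : ℕ).factorization p :=
      hp.factorization_pos_of_dvd hn0 (Nat.dvd_of_mem_primeFactors (hF' n hn))
    have hv1 : (n : ℕ).factorization p - 1 + 1 = (n : ℕ).factorization p :=
      Nat.succ_pred_eq_of_pos hv
    have hdecomp : (n : ℕ) = p ^ ((n : ℕ).factorization p) * ordCompl[p] (n : ℕ) :=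
      (Nat.ordProj_mul_ordCompl_eq_self _ _).symm
    simp only [hι]
    rw [hv1, mul_one_div, div_div, ← Nat.cast_pow, ← Nat.cast_mul, ← hdecomp]
  have hinj : ∀ x ∈ F', ∀ z ∈ F', ι x = ι z → x = z := by
    intro x hx z hz hxz
    have hvx : 0 < (x : ℕ).factorization p :=
      hp.factorization_pos_of_dvd x.2.1.ne' (Nat.dvd_of_mem_primeFactors (hF' x hx))
    have hvz : 0 < (z : ℕ).factorization p :=
      hp.factorization_pos_of_dvd z.2.1.ne' (Nat.dvd_of_mem_primeFactors (hF' z hz))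
    have h1 := congrArg Prod.fst hxz
    have h2 := congrArg (fun w : ℕ ×
      {m : ℕ // 0 < m ∧ ∀ p : ℕ, p.Prime → p ∣ m → (p : ℝ) ≤ y} => (w.2 : ℕ)) hxz
    simp only [hι] at h1 h2
    have hveq : (x : ℕ).factorization p = (z : ℕ).factorization p := by omega
    refine Subtype.ext ?_
    calc (x : ℕ) = p ^ ((x : ℕ).factorization p) * ordCompl[p] (x : ℕ) :=
          (Nat.ordProj_mul_ordCompl_eq_self _ _).symm
      _ = p ^ ((z : ℕ).factorization p) * ordCompl[p] (z : ℕ) := by rw [h2, hveq]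
      _ = (z : ℕ) := Nat.ordProj_mul_ordCompl_eq_self _ _
  calc ∑ n ∈ F', |1 - χ (p ^ ((n : ℕ).factorization p))| / ((n : ℕ) : ℝ)
      = ∑ n ∈ F', (|1 - χ (p ^ ((ι n).1 + 1))| / (p : ℝ) ^ ((ι n).1 + 1))
          * ((1 : ℝ) / (((ι n).2 : ℕ) : ℝ)) := Finset.sum_congr rfl hpoint
    _ = ∑ z ∈ F'.image ι, (|1 - χ (p ^ (z.1 + 1))| / (p : ℝ) ^ (z.1 + 1))
          * ((1 : ℝ) / ((z.2 : ℕ) : ℝ)) :=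
        (Finset.sum_image (f := fun z => (|1 - χ (p ^ (z.1 + 1))| / (p : ℝ) ^ (z.1 + 1))
          * ((1 : ℝ) / ((z.2 : ℕ) : ℝ))) hinj).symm
    _ ≤ ∑' z : ℕ × {m : ℕ // 0 < m ∧ ∀ p : ℕ, p.Prime → p ∣ m → (p : ℝ) ≤ y},
          (|1 - χ (p ^ (z.1 + 1))| / (p : ℝ) ^ (z.1 + 1)) * ((1 : ℝ) / ((z.2 : ℕ) : ℝ)) :=
        Summable.sum_le_tsum _ (fun z _ => by positivity) hHsum
    _ = _ := htsum.symm

set_option maxHeartbeats 1000000 in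
/-- For a real completely multiplicative `χ` with values in `{-1,0,1}` and `y ≥ 2`,
`Σ_{n ∈ S(y)} |1 − χ(n)|/n ≤ (Σ_{p ≤ y, j ≥ 1} |1 − χ(p^j)|/p^j) · Σ_{m ∈ S(y)} 1/m`,
where both friable sums converge. -/
theorem friable_distance_sum_bound (χ : ℕ → ℝ) (h1 : χ 1 = 1)
    (hmul : ∀ m n : ℕ, χ (m * n) = χ m * χ n)
    (hval : ∀ n : ℕ, χ n = -1 ∨ χ n = 0 ∨ χ n = 1)
    (y : ℝ) (hy : 2 ≤ y) :
    Summable (fun n : {n : ℕ // 0 < n ∧ ∀ p : ℕ, p.Prime → p ∣ n → (p : ℝ) ≤ y} =>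
        |1 - χ n| / ((n : ℕ) : ℝ)) ∧
    Summable (fun m : {m : ℕ // 0 < m ∧ ∀ p : ℕ, p.Prime → p ∣ m → (p : ℝ) ≤ y} =>
        (1 : ℝ) / ((m : ℕ) : ℝ)) ∧
    (∑' n : {n : ℕ // 0 < n ∧ ∀ p : ℕ, p.Prime → p ∣ n → (p : ℝ) ≤ y},
        |1 - χ n| / ((n : ℕ) : ℝ))
      ≤ (∑ p ∈ (Finset.Icc 1 ⌊y⌋₊).filter Nat.Prime,
            ∑' j : ℕ, |1 - χ (p ^ (j + 1))| / (p : ℝ) ^ (j + 1))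
        * ∑' m : {m : ℕ // 0 < m ∧ ∀ p : ℕ, p.Prime → p ∣ m → (p : ℝ) ≤ y},
            (1 : ℝ) / ((m : ℕ) : ℝ) := by
  set K := ⌊y⌋₊ + 1 with hK
  set f : ℕ →* ℝ := ⟨⟨fun n => ((n : ℝ))⁻¹, by norm_num⟩,
    by intro m n; push_cast; rw [mul_inv]⟩ with hf
  have hflt : ∀ {p : ℕ}, p.Prime → ‖f p‖ < 1 := by
    intro p hp
    have h2 : (2:ℝ) ≤ p := by exact_mod_cast hp.two_le
    rw [hf]
    simp only [MonoidHom.coe_mk, OneHom.coe_mk, Real.norm_eq_abs]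
    rw [abs_of_nonneg (by positivity), inv_lt_one_iff₀]
    right; linarith
  have hsmooth : Summable (fun m : K.smoothNumbers => ‖f m‖) :=
    (EulerProduct.summable_and_hasSum_smoothNumbers_prod_primesBelow_geometric hflt K).1
  have hiff : ∀ n : ℕ,
      (0 < n ∧ ∀ p : ℕ, p.Prime → p ∣ n → (p : ℝ) ≤ y) ↔ n ∈ K.smoothNumbers := by
    intro n
    constructor
    · rintro ⟨h0, h⟩
      exact Nat.mem_smoothNumbers.mpr ⟨h0.ne', fun p hp =>
        Nat.lt_succ_of_le (Nat.le_floor (h p (Nat.prime_of_mem_primeFactorsList hp)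
          (Nat.dvd_of_mem_primeFactorsList hp)))⟩
    · intro h
      refine ⟨Nat.pos_of_ne_zero (Nat.ne_zero_of_mem_smoothNumbers h), fun p hp hd => ?_⟩
      have := Nat.lt_succ_iff.mp (Nat.mem_smoothNumbers'.mp h p hp hd)
      exact (Nat.le_floor_iff (by linarith)).mp this
  set e : {n : ℕ // 0 < n ∧ ∀ p : ℕ, p.Prime → p ∣ n → (p : ℝ) ≤ y} ≃ K.smoothNumbers :=
    Equiv.subtypeEquivRight hiff with he
  have hTs : Summable (fun m : {m : ℕ // 0 < m ∧ ∀ p : ℕ, p.Prime → p ∣ m → (p : ℝ) ≤ y} =>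
      (1 : ℝ) / ((m : ℕ) : ℝ)) := by
    have h2 : Summable (fun m : K.smoothNumbers => (1:ℝ) / ((m : ℕ) : ℝ)) := by
      refine hsmooth.congr fun m => ?_
      simp [hf, Real.norm_eq_abs, abs_of_nonneg, one_div]
    exact e.summable_iff.mpr h2
  have hLs : Summable (fun n : {n : ℕ // 0 < n ∧ ∀ p : ℕ, p.Prime → p ∣ n → (p : ℝ) ≤ y} =>
      |1 - χ n| / ((n : ℕ) : ℝ)) := by
    refine Summable.of_nonneg_of_le (fun n => by positivity) (fun n => ?_) (hTs.mul_left 2)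
    have hb := abs_one_sub_chi_le_two χ hval n
    have hn : (0:ℝ) < ((n : ℕ) : ℝ) := by exact_mod_cast n.2.1
    rw [mul_one_div]
    gcongr
  refine ⟨hLs, hTs, ?_⟩
  have hc : ∀ p : ℕ, p.Prime →
      Summable (fun j : ℕ => |1 - χ (p ^ (j + 1))| / (p : ℝ) ^ (j + 1)) := by
    intro p hp
    have hp2 : (2:ℝ) ≤ p := by exact_mod_cast hp.two_le
    have hr0 : (0:ℝ) ≤ (p:ℝ)⁻¹ := by positivity
    have hr1 : (p:ℝ)⁻¹ < 1 := by rw [inv_lt_one_iff₀]; right; linarith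
    have hgeo : Summable (fun j : ℕ => (2 * (p:ℝ)⁻¹) * ((p:ℝ)⁻¹) ^ j) :=
      (summable_geometric_of_lt_one hr0 hr1).mul_left _
    refine Summable.of_nonneg_of_le (fun j => by positivity) (fun j => ?_) hgeo
    have hb := abs_one_sub_chi_le_two χ hval (p ^ (j + 1))
    have hppos : (0:ℝ) < (p:ℝ) ^ (j+1) := by positivity
    calc |1 - χ (p ^ (j+1))| / (p:ℝ)^(j+1) ≤ 2 / (p:ℝ)^(j+1) := by gcongr
      _ = 2 * (p:ℝ)⁻¹ * ((p:ℝ)⁻¹) ^ j := by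
          rw [div_eq_mul_inv, ← inv_pow, pow_succ]; ring
  apply Summable.tsum_le_of_sum_le hLs
  intro F
  set Pfin := (Finset.Icc 1 ⌊y⌋₊).filter Nat.Prime with hPfin
  have step1 : ∀ n : {n : ℕ // 0 < n ∧ ∀ p : ℕ, p.Prime → p ∣ n → (p : ℝ) ≤ y}, n ∈ F →
      |1 - χ n| / ((n : ℕ) : ℝ) ≤
      ∑ p ∈ Pfin, (if p ∈ (n : ℕ).primeFactors
        then |1 - χ (p ^ ((n : ℕ).factorization p))| / ((n : ℕ) : ℝ) else 0) := by
    intro n _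
    have hn0 : (0:ℝ) < ((n : ℕ) : ℝ) := by exact_mod_cast n.2.1
    have hsub : (n : ℕ).primeFactors ⊆ Pfin := by
      intro p hp
      have hpp := Nat.prime_of_mem_primeFactors hp
      have hpd := Nat.dvd_of_mem_primeFactors hp
      exact Finset.mem_filter.mpr ⟨Finset.mem_Icc.mpr
        ⟨hpp.one_lt.le, Nat.le_floor (n.2.2 p hpp hpd)⟩, hpp⟩
    rw [Finset.sum_ite_mem, Finset.inter_eq_right.mpr hsub, ← Finset.sum_div]
    gcongr
    exact key_bound χ h1 hmul hval _ n.2.1.ne'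
  calc ∑ n ∈ F, |1 - χ n| / ((n : ℕ) : ℝ)
      ≤ ∑ n ∈ F, ∑ p ∈ Pfin, (if p ∈ (n : ℕ).primeFactors
          then |1 - χ (p ^ ((n : ℕ).factorization p))| / ((n : ℕ) : ℝ) else 0) :=
        Finset.sum_le_sum step1
    _ = ∑ p ∈ Pfin, ∑ n ∈ F, (if p ∈ (n : ℕ).primeFactors
          then |1 - χ (p ^ ((n : ℕ).factorization p))| / ((n : ℕ) : ℝ) else 0) :=
        Finset.sum_comm
    _ ≤ ∑ p ∈ Pfin, (∑' j : ℕ, |1 - χ (p ^ (j + 1))| / (p : ℝ) ^ (j + 1))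
          * ∑' m : {m : ℕ // 0 < m ∧ ∀ p : ℕ, p.Prime → p ∣ m → (p : ℝ) ≤ y},
              (1 : ℝ) / ((m : ℕ) : ℝ) := by
        refine Finset.sum_le_sum fun p hpmem => ?_
        obtain ⟨hpIcc, hp⟩ := Finset.mem_filter.mp hpmem
        rw [← Finset.sum_filter]
        exact inner_bound χ y p hp (hc p hp) hTs _ (fun n hn => (Finset.mem_filter.mp hn).2)
    _ = _ := (Finset.sum_mul _ _ _).symm
end
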